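/- arXiv:math/0504135 — 4 statements merged into one kernel-verified Lean document; each statement's English description precedes it below -/
import Mathlib

section
/- Let ε ∈ (0,1], and let φ, φ̄, v̄ be smooth on 𝕋^d satisfying: ∫|∇φ|² ≤ Cε², ‖∇φ̄‖_{L^∞} ≤ Cε, ‖∇²v̄‖_{L^∞} ≤ C, and ‖∇φ‖_{L^∞} ≤ C. Define Δ = ∫ (⟨∇v̄⟩(x) − ∇v̄(x)) ∇φ·∇φ dx, where ⟨∇v̄⟩(x) = ∫_0^1 ∇v̄(x + sε∇φ(x)) ds. Then |Δ| ≤ C' ε^{10/3} + C' ∫ |∇φ − ∇φ̄|² dx, with C' depending only on C and d. -/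
open MeasureTheory Real RealInnerProductSpace

noncomputable section

/-- A fundamental domain of the torus `𝕋^d = ℝ^d/ℤ^d`. -/
def fundDom (d : ℕ) : Set (EuclideanSpace ℝ (Fin d)) := {x | ∀ i, x i ∈ Set.Ioc (0:ℝ) 1}

/-- `ℤ^d`-periodicity of a function on `ℝ^d`, i.e. a function on the torus. -/
def ZPeriodic {d : ℕ} {α : Type*} (f : EuclideanSpace ℝ (Fin d) → α) : Prop :=
  ∀ (x : EuclideanSpace ℝ (Fin d)) (k : Fin d → ℤ), f (WithLp.toLp 2 (fun i => x i + (k i : ℝ))) = f x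

/-!
As `∇v̄` is `C`-Lipschitz, `|⟨∇v̄⟩ - ∇v̄| ≤ Cε|∇φ|`, so the integrand is bounded by `Cε|∇φ|³`.
Where `|∇φ| ≤ R` this is at most `CεR|∇φ|²`, whose integral is `≤ C²Rε³`. Where `|∇φ| > R` and
`R ≥ 2‖∇φ̄‖_∞`, we have `|∇φ| ≤ 2|∇φ - ∇φ̄|`, and with `|∇φ| ≤ C` the integrand is at most
`4C²ε|∇φ - ∇φ̄|²`. The cut-off `R = (1 + 2C) ε^{1/3}` satisfies both requirements.
-/

lemma fundDom_eq_preimage (d : ℕ) :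
    fundDom d = WithLp.ofLp ⁻¹' Set.univ.pi fun _ : Fin d => Set.Ioc (0 : ℝ) 1 := by
  ext x
  simp [fundDom]

lemma volume_fundDom (d : ℕ) : volume (fundDom d) = 1 := by
  rw [fundDom_eq_preimage, (PiLp.volume_preserving_ofLp _).measure_preimage
    (MeasurableSet.univ_pi fun _ => measurableSet_Ioc).nullMeasurableSet, Real.volume_pi_Ioc]
  simp

lemma measurable_gradient {F : Type*} [NormedAddCommGroup F] [InnerProductSpace ℝ F]
    [CompleteSpace F] [MeasurableSpace F] [BorelSpace F] (f : F → ℝ) :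
    Measurable (gradient f) :=
  (InnerProductSpace.toDual ℝ F).symm.continuous.measurable.comp (measurable_fderiv ℝ f)

lemma norm_integral_apply_segment_sub_le {E F : Type*} [NormedAddCommGroup E] [NormedSpace ℝ E]
    [NormedAddCommGroup F] [NormedSpace ℝ F] [CompleteSpace F] {A : E → E →L[ℝ] F} {K : NNReal}
    (hA : LipschitzWith K A) (x v : E) {t : ℝ} (ht : 0 ≤ t) :
    ‖(∫ s in (0:ℝ)..1, A (x + (s * t) • v) v) - A x v‖ ≤ K * t * ‖v‖ ^ 2 := by
  have hcont : Continuous fun s : ℝ => A (x + (s * t) • v) v := by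
    have := hA.continuous
    fun_prop
  have hbound : ∀ s ∈ Set.uIoc (0:ℝ) 1, ‖A (x + (s * t) • v) v - A x v‖ ≤ K * t * ‖v‖ ^ 2 := by
    rintro s ⟨hs0, hs1⟩
    rw [min_eq_left zero_le_one] at hs0
    rw [max_eq_right zero_le_one] at hs1
    calc ‖A (x + (s * t) • v) v - A x v‖ = ‖(A (x + (s * t) • v) - A x) v‖ := rfl
      _ ≤ ‖A (x + (s * t) • v) - A x‖ * ‖v‖ := (A _ - A x).le_opNorm v
      _ ≤ K * ‖(s * t) • v‖ * ‖v‖ := by gcongr; simpa using hA.norm_sub_le (x + (s * t) • v) x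
      _ = s * (K * t * ‖v‖ ^ 2) := by
        rw [norm_smul, Real.norm_of_nonneg (by positivity)]; ring
      _ ≤ K * t * ‖v‖ ^ 2 := mul_le_of_le_one_left (by positivity) hs1
  calc ‖(∫ s in (0:ℝ)..1, A (x + (s * t) • v) v) - A x v‖
      = ‖∫ s in (0:ℝ)..1, (A (x + (s * t) • v) v - A x v)‖ := by
        rw [intervalIntegral.integral_sub (hcont.intervalIntegrable 0 1) intervalIntegrable_const]
        simp
    _ ≤ K * t * ‖v‖ ^ 2 * |1 - 0| := intervalIntegral.norm_integral_le_of_norm_le_const hbound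
    _ = K * t * ‖v‖ ^ 2 := by simp

lemma norm_pow_three_le_of_two_norm_le {E : Type*} [SeminormedAddCommGroup E] {g h : E} {M R : ℝ}
    (hg : ‖g‖ ≤ M) (hR : 2 * ‖h‖ ≤ R) : ‖g‖ ^ 3 ≤ R * ‖g‖ ^ 2 + 4 * M * ‖g - h‖ ^ 2 := by
  have hM : 0 ≤ M := (norm_nonneg g).trans hg
  have hR0 : 0 ≤ R := (mul_nonneg zero_le_two (norm_nonneg h)).trans hR
  rw [pow_succ', mul_comm]
  rcases le_or_gt ‖g‖ R with hgR | hRg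
  · have : ‖g‖ ^ 2 * ‖g‖ ≤ ‖g‖ ^ 2 * R := by gcongr
    nlinarith [norm_nonneg (g - h)]
  · have hgh : ‖g‖ ≤ 2 * ‖g - h‖ := by linarith [norm_sub_norm_le g h]
    calc ‖g‖ ^ 2 * ‖g‖ ≤ (2 * ‖g - h‖) ^ 2 * M := by gcongr
      _ ≤ R * ‖g‖ ^ 2 + 4 * M * ‖g - h‖ ^ 2 := by nlinarith [sq_nonneg ‖g‖]

lemma abs_inner_integral_apply_segment_sub_le {E : Type*} [NormedAddCommGroup E]
    [InnerProductSpace ℝ E] [CompleteSpace E] {A : E → E →L[ℝ] E} {K : NNReal}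
    (hA : LipschitzWith K A) (x : E) {v w : E} {t M R : ℝ} (ht : 0 ≤ t) (hv : ‖v‖ ≤ M)
    (hR : 2 * ‖w‖ ≤ R) :
    |⟪(∫ s in (0:ℝ)..1, A (x + (s * t) • v) v) - A x v, v⟫| ≤
      K * t * R * ‖v‖ ^ 2 + 4 * K * t * M * ‖v - w‖ ^ 2 :=
  calc _ ≤ K * t * ‖v‖ ^ 2 * ‖v‖ := by
        refine (abs_real_inner_le_norm _ _).trans ?_
        gcongr
        exact norm_integral_apply_segment_sub_le hA x v ht
    _ ≤ K * t * (R * ‖v‖ ^ 2 + 4 * M * ‖v - w‖ ^ 2) := by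
        rw [mul_assoc, ← pow_succ]
        gcongr
        exact norm_pow_three_le_of_two_norm_le hv hR
    _ = _ := by ring

lemma integrableOn_norm_sq_of_norm_le {α E : Type*} [MeasurableSpace α] [NormedAddCommGroup E]
    {μ : Measure α} {s : Set α} (hs : μ s < ⊤) {g : α → E}
    (hg : AEStronglyMeasurable g (μ.restrict s)) {M : ℝ} (hM : ∀ x, ‖g x‖ ≤ M) :
    IntegrableOn (fun x => ‖g x‖ ^ 2) s μ :=
  .of_bound hs (hg.norm.pow 2) (M ^ 2) <| ae_of_all _ fun x => by
    rw [norm_pow, norm_norm]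
    exact pow_le_pow_left₀ (norm_nonneg _) (hM x) 2

lemma abs_integral_le_of_abs_le_add {α : Type*} [MeasurableSpace α] {μ : Measure α}
    {f u w : α → ℝ} (hu : Integrable u μ) (hw : Integrable w μ) {a b : ℝ}
    (hf : ∀ x, |f x| ≤ a * u x + b * w x) :
    |∫ x, f x ∂μ| ≤ a * ∫ x, u x ∂μ + b * ∫ x, w x ∂μ := by
  rw [← integral_const_mul, ← integral_const_mul,
    ← integral_add (hu.const_mul a) (hw.const_mul b)]
  exact norm_integral_le_of_norm_le ((hu.const_mul a).add (hw.const_mul b))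
    (ae_of_all _ fun x => (Real.norm_eq_abs _).trans_le (hf x))

/-- the error term
`Δ = ∫ (⟨∇v̄⟩(x) − ∇v̄(x)) ∇φ·∇φ dx`, with `⟨∇v̄⟩(x) = ∫₀¹ ∇v̄(x + sε∇φ(x)) ds`,
satisfies `|Δ| ≤ C' ε^{10/3} + C' ∫ |∇φ − ∇φ̄|²`, with `C'` depending only on `C` and `d`. -/
theorem averaged_gradient_error_estimate :
    ∀ (C : ℝ) (d : ℕ), 0 < C → ∃ C' : ℝ, 0 < C' ∧
      ∀ (ε : ℝ) (φ φbar : EuclideanSpace ℝ (Fin d) → ℝ)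
        (vbar : EuclideanSpace ℝ (Fin d) → EuclideanSpace ℝ (Fin d)),
        0 < ε → ε ≤ 1 →
        ContDiff ℝ 1 φ → ContDiff ℝ 1 φbar → ContDiff ℝ 2 vbar →
        ZPeriodic φ → ZPeriodic φbar → ZPeriodic vbar →
        (∫ x in fundDom d, ‖gradient φ x‖ ^ 2) ≤ C * ε ^ 2 →
        (∀ x, ‖gradient φbar x‖ ≤ C * ε) →
        (∀ x, ‖fderiv ℝ (fun y => fderiv ℝ vbar y) x‖ ≤ C) →
        (∀ x, ‖gradient φ x‖ ≤ C) →
        |∫ x in fundDom d,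
            ⟪(∫ s in (0:ℝ)..1, fderiv ℝ vbar (x + (s * ε) • gradient φ x) (gradient φ x))
                - fderiv ℝ vbar x (gradient φ x), gradient φ x⟫|
          ≤ C' * ε ^ ((10:ℝ)/3)
            + C' * ∫ x in fundDom d, ‖gradient φ x - gradient φbar x‖ ^ 2 := by
  intro C d hC
  refine ⟨C ^ 2 * (5 + 2 * C), by positivity, ?_⟩
  intro ε φ φbar vbar hε hε1 _ _ hv _ _ _ hφL2 hφbarL hv2 hφL
  set R := (1 + 2 * C) * ε ^ ((1:ℝ) / 3)
  have hR : ∀ x, 2 * ‖gradient φbar x‖ ≤ R := fun x => by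
    nlinarith [hφbarL x, Real.self_le_rpow_of_le_one hε.le hε1 (by norm_num : (1:ℝ) / 3 ≤ 1)]
  have hlip : LipschitzWith ⟨C, hC.le⟩ (fderiv ℝ vbar) :=
    lipschitzWith_of_nnnorm_fderiv_le ((hv.fderiv_right le_rfl).differentiable one_ne_zero) hv2
  have hpt := fun x => abs_inner_integral_apply_segment_sub_le hlip x hε.le (hφL x) (hR x)
  have hvol : volume (fundDom d) < ⊤ := by simp [volume_fundDom]
  have hgφ := (measurable_gradient φ).aestronglyMeasurable (μ := volume.restrict (fundDom d))
  have hgφbar := (measurable_gradient φbar).aestronglyMeasurable (μ := volume.restrict (fundDom d))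
  have h10 : ε ^ 3 * ε ^ ((1:ℝ) / 3) = ε ^ ((10:ℝ) / 3) := by
    rw [← Real.rpow_natCast, ← Real.rpow_add hε]
    norm_num
  calc _ ≤ C * ε * R * (∫ x in fundDom d, ‖gradient φ x‖ ^ 2)
        + 4 * C * ε * C * ∫ x in fundDom d, ‖gradient φ x - gradient φbar x‖ ^ 2 :=
        abs_integral_le_of_abs_le_add (integrableOn_norm_sq_of_norm_le hvol hgφ hφL)
          (integrableOn_norm_sq_of_norm_le hvol (hgφ.sub hgφbar)
            fun x => norm_sub_le_of_le (hφL x) (hφbarL x)) hpt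
    _ ≤ C * ε * R * (C * ε ^ 2)
        + 4 * C * 1 * C * ∫ x in fundDom d, ‖gradient φ x - gradient φbar x‖ ^ 2 := by gcongr
    _ = C ^ 2 * (1 + 2 * C) * ε ^ ((10:ℝ) / 3)
        + 4 * C ^ 2 * ∫ x in fundDom d, ‖gradient φ x - gradient φbar x‖ ^ 2 := by
        rw [← h10]; ring
    _ ≤ _ := by
        have hI : 0 ≤ ∫ x in fundDom d, ‖gradient φ x - gradient φbar x‖ ^ 2 :=
          integral_nonneg fun x => by positivity
        gcongr ?_ * _ + ?_ * _ <;> nlinarith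
end
end

section
/- Let f be transported along the characteristic flow of ∂_t f + ξ·∇_x f + E(t,x)·∇_ξ f = 0 on 𝕋^d × ℝ^d with ‖E‖_{L^∞} ≤ F. Suppose a, b : 𝕋^d × ℝ^d → ℝ satisfy a ≤ f(0,·,·) ≤ b, |∇_{x,ξ} a|, |∇_{x,ξ} b| ≤ c/(1 + |ξ|^{d+2}), and set ρ_a(x) = ∫ a dξ ≥ m > 0, ρ_b(x) = ∫ b dξ ≤ M < ∞. Then there exists R = R(F, c, d) > 0 such that for all t ∈ [0, min(T,1)] and all x, ρ_a(x) − Rt ≤ ρ(t,x) ≤ ρ_b(x) + Rt, where ρ(t,x) = ∫ f(t,x,ξ) dξ. -/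
/-!
`f` is constant along the characteristics `x' = ξ, ξ' = E(t, x)`. As `E` is only continuous,
we follow backward Euler polygons of this field instead: by uniform continuity of `E` on a
compact set, `f` changes by at most `ε h` per step of length `h`, so `f(t, x, ξ)` is within `ε`
of `f(0, X, Ξ)` for some `X, Ξ` with `|X - x| ≤ (|ξ| + F) t` and `|Ξ - ξ| ≤ F t`. All velocities on
the segment from `(x, ξ)` to `(X, Ξ)` have norm at least `|ξ| - F`, so the gradient decay of `a`
and `b` gives `a - t w ≤ f(t) ≤ b + t w` pointwise, with
`w(ξ) = 2 c (|ξ| + F) / (1 + max(0, |ξ| - F)^(d+2))` integrable in dimension `d`;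
integrating in `ξ` yields the claim with `R = max (∫ w) 1`.
-/

open MeasureTheory Real RealInnerProductSpace

noncomputable section

section PartialDerivatives

variable {𝕜 : Type*} [NontriviallyNormedField 𝕜] {E₁ E₂ G : Type*}
  [NormedAddCommGroup E₁] [NormedSpace 𝕜 E₁] [NormedAddCommGroup E₂] [NormedSpace 𝕜 E₂]
  [NormedAddCommGroup G] [NormedSpace 𝕜 G] {P : E₁ × E₂ → G} {y : E₁} {z : E₂}

theorem fderiv_prodMk_left_apply (hP : DifferentiableAt 𝕜 P (y, z)) (v : E₁) :
    fderiv 𝕜 (fun y' => P (y', z)) y v = fderiv 𝕜 P (y, z) (v, 0) := by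
  rw [show (fun y' => P (y', z)) = P ∘ fun y' => (y', z) from rfl,
    (hP.hasFDerivAt.comp y (hasFDerivAt_prodMk_left y z)).fderiv]
  simp

theorem fderiv_prodMk_right_apply (hP : DifferentiableAt 𝕜 P (y, z)) (v : E₂) :
    fderiv 𝕜 (fun z' => P (y, z')) z v = fderiv 𝕜 P (y, z) (0, v) := by
  rw [show (fun z' => P (y, z')) = P ∘ fun z' => (y, z') from rfl,
    (hP.hasFDerivAt.comp z (hasFDerivAt_prodMk_right y z)).fderiv]
  simp

end PartialDerivatives

section GradientDecay

variable {E₁ E₂ : Type*} [NormedAddCommGroup E₁] [InnerProductSpace ℝ E₁] [CompleteSpace E₁]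
  [NormedAddCommGroup E₂] [InnerProductSpace ℝ E₂] [CompleteSpace E₂]

theorem norm_fderiv_prod_le_two_mul_sqrt {A : E₁ × E₂ → ℝ} {y : E₁} {η : E₂}
    (hA : DifferentiableAt ℝ A (y, η)) :
    ‖fderiv ℝ A (y, η)‖ ≤ 2 * √(‖gradient (fun y' => A (y', η)) y‖ ^ 2
      + ‖gradient (fun η' => A (y, η')) η‖ ^ 2) := by
  set g₁ := gradient (fun y' => A (y', η)) y
  set g₂ := gradient (fun η' => A (y, η')) η
  have hg₁ : ‖g₁‖ ≤ √(‖g₁‖ ^ 2 + ‖g₂‖ ^ 2) :=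
    (le_sqrt (norm_nonneg _) (by positivity)).2 (le_add_of_nonneg_right (by positivity))
  have hg₂ : ‖g₂‖ ≤ √(‖g₁‖ ^ 2 + ‖g₂‖ ^ 2) :=
    (le_sqrt (norm_nonneg _) (by positivity)).2 (le_add_of_nonneg_left (by positivity))
  refine ContinuousLinearMap.opNorm_le_bound _ (by positivity) fun w => ?_
  have hw : fderiv ℝ A (y, η) w = ⟪g₁, w.1⟫ + ⟪g₂, w.2⟫ := by
    rw [inner_gradient_left, inner_gradient_left, fderiv_prodMk_left_apply hA,
      fderiv_prodMk_right_apply hA, ← map_add, Prod.mk_add_mk, add_zero, zero_add]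
  rw [hw, Real.norm_eq_abs]
  calc |⟪g₁, w.1⟫ + ⟪g₂, w.2⟫| ≤ ‖g₁‖ * ‖w.1‖ + ‖g₂‖ * ‖w.2‖ :=
        (abs_add_le _ _).trans
          (add_le_add (abs_real_inner_le_norm _ _) (abs_real_inner_le_norm _ _))
    _ ≤ √(‖g₁‖ ^ 2 + ‖g₂‖ ^ 2) * ‖w‖ + √(‖g₁‖ ^ 2 + ‖g₂‖ ^ 2) * ‖w‖ := by
        gcongr
        exacts [norm_fst_le w, norm_snd_le w]
    _ = _ := by ring

end GradientDecay

section ShiftedDecay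

variable {E : Type*} [NormedAddCommGroup E]

def shiftedDecay (c F : ℝ) (n : ℕ) (ξ : E) : ℝ := c / (1 + max 0 (‖ξ‖ - F) ^ n)

theorem div_one_add_norm_pow_le_shiftedDecay {c F : ℝ} (hc : 0 ≤ c) (n : ℕ) {ξ η : E}
    (hη : ‖η - ξ‖ ≤ F) : c / (1 + ‖η‖ ^ n) ≤ shiftedDecay c F n ξ := by
  have hξη : max 0 (‖ξ‖ - F) ≤ ‖η‖ :=
    max_le (norm_nonneg _) (by linarith [norm_sub_norm_le ξ η, norm_sub_rev ξ η])
  unfold shiftedDecay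
  gcongr

theorem one_add_pow_le_mul_one_add_max_pow {u F : ℝ} (hu : 0 ≤ u) (hF : 0 ≤ F) (n : ℕ) :
    (1 + u) ^ n ≤ (2 + 2 * F) ^ n * (1 + max 0 (u - F) ^ n) := by
  rcases le_or_gt u (1 + 2 * F) with hsmall | hlarge
  · calc (1 + u) ^ n ≤ (2 + 2 * F) ^ n := pow_le_pow_left₀ (by positivity) (by linarith) n
      _ ≤ (2 + 2 * F) ^ n * (1 + max 0 (u - F) ^ n) :=
          le_mul_of_one_le_right (by positivity) (le_add_of_nonneg_right (by positivity))
  · rw [max_eq_right (by linarith)]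
    calc (1 + u) ^ n ≤ ((2 + 2 * F) * (u - F)) ^ n := by gcongr; nlinarith
      _ ≤ (2 + 2 * F) ^ n * (1 + (u - F) ^ n) := by
          rw [mul_pow]; gcongr; exact le_add_of_nonneg_left zero_le_one

theorem add_div_one_add_max_pow_le {u F : ℝ} (hu : 0 ≤ u) (hF : 0 ≤ F) (n : ℕ) :
    (u + F) / (1 + max 0 (u - F) ^ (n + 1)) ≤ (1 + F) * (2 + 2 * F) ^ (n + 1) / (1 + u) ^ n := by
  rw [div_le_div_iff₀ (by positivity) (by positivity)]
  calc (u + F) * (1 + u) ^ n ≤ (1 + F) * (1 + u) * (1 + u) ^ n := by gcongr; nlinarith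
    _ = (1 + F) * (1 + u) ^ (n + 1) := by ring
    _ ≤ _ := by
        rw [mul_assoc]; gcongr; exact one_add_pow_le_mul_one_add_max_pow hu hF (n + 1)

theorem integrable_shiftedDecay_mul_norm_add [NormedSpace ℝ E] [FiniteDimensional ℝ E]
    [MeasurableSpace E] [BorelSpace E] {μ : Measure E} [μ.IsAddHaarMeasure] {n : ℕ}
    (hn : Module.finrank ℝ E < n) (c : ℝ) {F : ℝ} (hF : 0 ≤ F) :
    Integrable (fun ξ => shiftedDecay c F (n + 1) ξ * (‖ξ‖ + F)) μ := by
  have hmajor : Integrable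
      (fun ξ : E => (1 + F) * (2 + 2 * F) ^ (n + 1) * (1 + ‖ξ‖) ^ (-(n : ℝ))) μ :=
    (integrable_one_add_norm (by exact_mod_cast hn)).const_mul _
  have hweight : Integrable (fun ξ : E => (‖ξ‖ + F) / (1 + max 0 (‖ξ‖ - F) ^ (n + 1))) μ := by
    refine hmajor.mono' (Measurable.aestronglyMeasurable (by fun_prop))
      (Filter.Eventually.of_forall fun ξ => ?_)
    rw [Real.norm_of_nonneg (by positivity), rpow_neg (by positivity), rpow_natCast,
      ← div_eq_mul_inv]
    exact add_div_one_add_max_pow_le (norm_nonneg ξ) hF n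
  convert hweight.const_mul c using 2 with ξ
  rw [shiftedDecay, mul_div_assoc', div_mul_eq_mul_div]

variable [InnerProductSpace ℝ E] [CompleteSpace E]

theorem abs_sub_le_of_gradient_decay {c F : ℝ} {n : ℕ} {a : E → E → ℝ}
    (ha : Differentiable ℝ fun q : E × E => a q.1 q.2)
    (hdecay : ∀ x ξ, √(‖gradient (fun y => a y ξ) x‖ ^ 2
      + ‖gradient (fun η => a x η) ξ‖ ^ 2) ≤ c / (1 + ‖ξ‖ ^ n))
    {x ξ X Ξ : E} (hΞ : ‖Ξ - ξ‖ ≤ F) {r : ℝ} (hr : max ‖X - x‖ ‖Ξ - ξ‖ ≤ r) :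
    |a X Ξ - a x ξ| ≤ 2 * shiftedDecay c F n ξ * r := by
  have hc : 0 ≤ c := by
    have := (sqrt_nonneg _).trans (hdecay x ξ)
    rwa [le_div_iff₀ (by positivity), zero_mul] at this
  have hbound : ∀ z ∈ segment ℝ (x, ξ) (X, Ξ),
      ‖fderiv ℝ (fun q : E × E => a q.1 q.2) z‖ ≤ 2 * shiftedDecay c F n ξ := by
    rintro ⟨y, η⟩ hz
    have hη : ‖η - ξ‖ ≤ F := (norm_sub_le_of_mem_segment (Prod.segment_subset _ _ hz).2).trans hΞ
    calc _ ≤ 2 * (c / (1 + ‖η‖ ^ n)) := (norm_fderiv_prod_le_two_mul_sqrt (ha _)).trans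
          (mul_le_mul_of_nonneg_left (hdecay y η) zero_le_two)
      _ ≤ _ := mul_le_mul_of_nonneg_left (div_one_add_norm_pow_le_shiftedDecay hc n hη)
          zero_le_two
  have hmvt := (convex_segment _ _).norm_image_sub_le_of_norm_fderiv_le (fun z _ => ha z) hbound
    (left_mem_segment ℝ _ _) (right_mem_segment ℝ _ _)
  rw [Real.norm_eq_abs, Prod.mk_sub_mk, Prod.norm_mk] at hmvt
  exact hmvt.trans (mul_le_mul_of_nonneg_left hr (by unfold shiftedDecay; positivity))

end ShiftedDecay

section EulerScheme

open Set

variable {W : Type*} [NormedAddCommGroup W] [NormedSpace ℝ W]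

theorem abs_sub_le_of_abs_fderiv_apply_le {P : W → ℝ} (hP : Differentiable ℝ P) {q w : W} {C : ℝ}
    (hC : ∀ u ∈ Icc (0 : ℝ) 1, |fderiv ℝ P (q + u • w) w| ≤ C) : |P (q + w) - P q| ≤ C := by
  have hderiv : ∀ u : ℝ, HasDerivAt (fun u => P (q + u • w)) (fderiv ℝ P (q + u • w) w) u :=
    fun u => (hP _).hasFDerivAt.comp_hasDerivAt u
      (((hasDerivAt_id u).smul_const w).const_add q |>.congr_deriv (one_smul ℝ w))
  simpa using norm_image_sub_le_of_norm_deriv_le_segment_01'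
    (fun u _ => (hderiv u).hasDerivWithinAt) fun u hu => hC u (Ico_subset_Icc_self hu)

def backwardEuler (V : ℝ × W → W) (t h : ℝ) (p : W) : ℕ → W
  | 0 => p
  | k + 1 => backwardEuler V t h p k - h • V (t - k * h, backwardEuler V t h p k)

theorem backwardEuler_succ (V : ℝ × W → W) (t h : ℝ) (p : W) (k : ℕ) :
    ((t - (k + 1 : ℕ) * h, backwardEuler V t h p (k + 1)) : ℝ × W)
      = (t - k * h, backwardEuler V t h p k)
        - h • ((1 : ℝ), V (t - k * h, backwardEuler V t h p k)) := by
  ext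
  · push_cast; simp only [Prod.fst_sub, Prod.smul_fst, smul_eq_mul]; ring
  · rfl

theorem ContinuousLinearMap.abs_apply_one_le_of_apply_one_eq_zero {ℓ : ℝ × W →L[ℝ] ℝ}
    {v w : W} (hw : ℓ (1, w) = 0) : |ℓ (1, v)| ≤ ‖ℓ‖ * ‖v - w‖ := by
  have hsplit : ((1 : ℝ), v) = (1, w) + (0, v - w) := by simp
  rw [hsplit, map_add, hw, zero_add, ← Real.norm_eq_abs]
  exact (ℓ.le_opNorm _).trans_eq (by rw [Prod.norm_mk, norm_zero, max_eq_right (norm_nonneg _)])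

variable {K : Set (ℝ × W)} {P : ℝ × W → ℝ} {V : ℝ × W → W}

theorem IsCompact.exists_pos_abs_euler_step_le (hK : IsCompact K) (hKconv : Convex ℝ K)
    (hP : ContDiff ℝ 1 P) (hV : ContinuousOn V K) (hPV : ∀ q ∈ K, fderiv ℝ P q (1, V q) = 0)
    {ε : ℝ} (hε : 0 < ε) :
    ∃ δ > 0, ∀ q ∈ K, ∀ h ∈ Icc 0 δ, q - h • ((1 : ℝ), V q) ∈ K →
      |P (q - h • ((1 : ℝ), V q)) - P q| ≤ ε * h := by
  obtain ⟨L, hL⟩ :=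
    hK.exists_bound_of_continuousOn (hP.continuous_fderiv one_ne_zero).continuousOn
  obtain ⟨B, hB⟩ := hK.exists_bound_of_continuousOn hV
  set L' := max L 1
  set B' := max 1 B
  obtain ⟨δ₀, hδ₀, hUC⟩ := Metric.uniformContinuousOn_iff.1
    (hK.uniformContinuousOn_of_continuous hV) (ε / L') (by positivity)
  refine ⟨δ₀ / (2 * B'), by positivity, fun q hq h hh hq' => ?_⟩
  rw [sub_eq_add_neg q, ← neg_smul]
  refine abs_sub_le_of_abs_fderiv_apply_le (hP.differentiable one_ne_zero) fun u hu => ?_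
  set z := q + u • (-h) • ((1 : ℝ), V q)
  have hz : z ∈ K := by
    have := hKconv.add_smul_sub_mem hq hq' hu
    rwa [sub_sub_cancel_left, ← neg_smul] at this
  have hdist : dist q z < δ₀ := by
    have hw : ‖((1 : ℝ), V q)‖ ≤ B' := by
      rw [Prod.norm_mk, norm_one]; exact max_le_max_left 1 (hB q hq)
    rw [dist_eq_norm, sub_add_cancel_left, norm_neg, norm_smul, norm_smul, norm_neg,
      Real.norm_of_nonneg hu.1, Real.norm_of_nonneg hh.1]
    calc u * (h * ‖((1 : ℝ), V q)‖) ≤ 1 * (δ₀ / (2 * B') * B') :=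
          mul_le_mul hu.2 (mul_le_mul hh.2 hw (norm_nonneg _) (by positivity))
            (mul_nonneg hh.1 (norm_nonneg _)) zero_le_one
      _ = δ₀ / 2 := by field_simp [(by positivity : B' ≠ 0)]
      _ < δ₀ := half_lt_self hδ₀
  rw [map_smul, smul_eq_mul, abs_mul, abs_neg, abs_of_nonneg hh.1, mul_comm ε]
  refine mul_le_mul_of_nonneg_left ?_ hh.1
  calc _ ≤ ‖fderiv ℝ P z‖ * ‖V q - V z‖ :=
        (fderiv ℝ P z).abs_apply_one_le_of_apply_one_eq_zero (hPV z hz)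
    _ ≤ L' * (ε / L') := mul_le_mul ((hL z hz).trans (le_max_left _ _))
        (dist_eq_norm (V q) (V z) ▸ (hUC q hq z hz hdist).le) (norm_nonneg _) (by positivity)
    _ = ε := mul_div_cancel₀ _ (by positivity)

theorem IsCompact.exists_pos_abs_backwardEuler_sub_le (hK : IsCompact K) (hKconv : Convex ℝ K)
    (hP : ContDiff ℝ 1 P) (hV : ContinuousOn V K) (hPV : ∀ q ∈ K, fderiv ℝ P q (1, V q) = 0)
    {ε : ℝ} (hε : 0 < ε) :
    ∃ δ > 0, ∀ (t : ℝ) (p : W) (h : ℝ) (n : ℕ), h ∈ Icc 0 δ →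
      (∀ k ≤ n, (t - k * h, backwardEuler V t h p k) ∈ K) →
      |P (t - n * h, backwardEuler V t h p n) - P (t, p)| ≤ ε * (n * h) := by
  obtain ⟨δ, hδ, hstep⟩ := hK.exists_pos_abs_euler_step_le hKconv hP hV hPV hε
  refine ⟨δ, hδ, fun t p h n hh hmem => ?_⟩
  set u : ℕ → ℝ := fun k => P (t - k * h, backwardEuler V t h p k)
  have hu : ∀ k ∈ Finset.range n, dist (u k) (u (k + 1)) ≤ ε * h := fun k hk => by
    have hk := Finset.mem_range.1 hk
    rw [dist_comm, Real.dist_eq]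
    simp only [u, backwardEuler_succ]
    exact hstep _ (hmem k hk.le) h hh (backwardEuler_succ V t h p k ▸ hmem (k + 1) hk)
  have hu₀ : u 0 = P (t, p) := by simp [u, backwardEuler]
  calc |u n - P (t, p)| = dist (u 0) (u n) := by rw [hu₀, dist_comm, Real.dist_eq]
    _ ≤ ∑ k ∈ Finset.range n, dist (u k) (u (k + 1)) := dist_le_range_sum_dist u n
    _ ≤ n * (ε * h) := by simpa using Finset.sum_le_card_nsmul _ _ _ hu
    _ = ε * (n * h) := by ring

end EulerScheme

section Characteristics

open Set Metric

variable {E : Type*} [NormedAddCommGroup E] [NormedSpace ℝ E]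

def vlasovField (Ef : ℝ → E → E) (q : ℝ × E × E) : E × E := (q.2.2, Ef q.1 q.2.1)

theorem backwardEuler_vlasovField_bounds {Ef : ℝ → E → E} {F : ℝ} (hEb : ∀ t x, ‖Ef t x‖ ≤ F)
    {h : ℝ} (hh : 0 ≤ h) (t : ℝ) (x ξ : E) (k : ℕ) :
    ‖(backwardEuler (vlasovField Ef) t h (x, ξ) k).2 - ξ‖ ≤ F * (k * h) ∧
      ‖(backwardEuler (vlasovField Ef) t h (x, ξ) k).1 - x‖ ≤ (‖ξ‖ + F * (k * h)) * (k * h) := by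
  have hF : 0 ≤ F := (norm_nonneg _).trans (hEb t x)
  have hstep (a b v : E) : ‖a - h • v - b‖ ≤ ‖a - b‖ + h * ‖v‖ := by
    rw [sub_right_comm]
    exact (norm_sub_le _ _).trans_eq (by rw [norm_smul, Real.norm_of_nonneg hh])
  induction k with
  | zero => simp [backwardEuler]
  | succ k ih =>
    set Q := backwardEuler (vlasovField Ef) t h (x, ξ) k
    have hQ₂ : ‖Q.2‖ ≤ ‖ξ‖ + F * (k * h) := by
      linarith [norm_le_norm_add_norm_sub' Q.2 ξ, ih.1]
    rw [show backwardEuler (vlasovField Ef) t h (x, ξ) (k + 1)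
      = Q - h • vlasovField Ef (t - k * h, Q) from rfl]
    simp only [Prod.fst_sub, Prod.snd_sub, Prod.smul_fst, Prod.smul_snd, vlasovField]
    push_cast
    constructor
    · calc ‖Q.2 - h • Ef (t - k * h) Q.1 - ξ‖ ≤ ‖Q.2 - ξ‖ + h * ‖Ef (t - k * h) Q.1‖ :=
            hstep _ _ _
        _ ≤ F * (k * h) + h * F := by gcongr; exacts [ih.1, hEb _ _]
        _ = F * ((k + 1) * h) := by ring
    · calc ‖Q.1 - h • Q.2 - x‖ ≤ ‖Q.1 - x‖ + h * ‖Q.2‖ := hstep _ _ _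
        _ ≤ (‖ξ‖ + F * (k * h)) * (k * h) + h * (‖ξ‖ + F * (k * h)) := by gcongr; exact ih.2
        _ ≤ (‖ξ‖ + F * ((k + 1) * h)) * ((k + 1) * h) := by
            have : 0 ≤ (k : ℝ) * h := by positivity
            nlinarith [mul_nonneg hF hh]

theorem backwardEuler_vlasovField_dist_le {Ef : ℝ → E → E} {F : ℝ}
    (hEb : ∀ t x, ‖Ef t x‖ ≤ F) {h : ℝ} (hh : 0 ≤ h) (t : ℝ) (x ξ : E) {k : ℕ}
    (hk : k * h ≤ 1) :
    ‖(backwardEuler (vlasovField Ef) t h (x, ξ) k).1 - x‖ ≤ (‖ξ‖ + F) * (k * h) ∧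
      ‖(backwardEuler (vlasovField Ef) t h (x, ξ) k).2 - ξ‖ ≤ F * (k * h) := by
  have hF : 0 ≤ F := (norm_nonneg _).trans (hEb t x)
  obtain ⟨hξ, hx⟩ := backwardEuler_vlasovField_bounds hEb hh t x ξ k
  refine ⟨hx.trans ?_, hξ⟩
  gcongr
  exact mul_le_of_le_one_right hF hk

theorem exists_abs_sub_le_of_fderiv_vlasovField_eq_zero [FiniteDimensional ℝ E]
    {P : ℝ × E × E → ℝ} {Ef : ℝ → E → E} {F : ℝ} (hP : ContDiff ℝ 1 P)
    (hE : Continuous fun p : ℝ × E => Ef p.1 p.2) (hEb : ∀ t x, ‖Ef t x‖ ≤ F)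
    (hPV : ∀ q, fderiv ℝ P q (1, vlasovField Ef q) = 0) {t : ℝ} (ht : t ∈ Icc 0 1) (x ξ : E)
    {ε : ℝ} (hε : 0 < ε) :
    ∃ X Ξ : E, ‖X - x‖ ≤ (‖ξ‖ + F) * t ∧ ‖Ξ - ξ‖ ≤ F * t ∧ |P (0, X, Ξ) - P (t, x, ξ)| ≤ ε := by
  have hF : 0 ≤ F := (norm_nonneg _).trans (hEb 0 x)
  set K := Icc (0 : ℝ) 1 ×ˢ (closedBall x (‖ξ‖ + F) ×ˢ closedBall ξ F)
  have hK : IsCompact K :=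
    isCompact_Icc.prod ((isCompact_closedBall _ _).prod (isCompact_closedBall _ _))
  have hKconv : Convex ℝ K :=
    (convex_Icc 0 1).prod ((convex_closedBall _ _).prod (convex_closedBall _ _))
  have hV : Continuous (vlasovField Ef) :=
    continuous_snd.snd.prodMk (hE.comp (continuous_fst.prodMk continuous_snd.fst))
  obtain ⟨δ, hδ, herr⟩ :=
    hK.exists_pos_abs_backwardEuler_sub_le hKconv hP hV.continuousOn (fun q _ => hPV q) hε
  obtain ⟨n, hn⟩ := exists_nat_gt (t / δ)
  have hn₀ : (0 : ℝ) < n := (div_nonneg ht.1 hδ.le).trans_lt hn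
  set h := t / n
  have hh : h ∈ Icc 0 δ := ⟨div_nonneg ht.1 hn₀.le, div_le_of_le_mul₀ hn₀.le hδ.le (by
    rw [div_lt_iff₀ hδ] at hn; linarith)⟩
  have hnh : n * h = t := mul_div_cancel₀ t hn₀.ne'
  set Q := backwardEuler (vlasovField Ef) t h (x, ξ)
  have hkh : ∀ k ≤ n, (k : ℝ) * h ∈ Icc 0 t := fun k hk =>
    ⟨mul_nonneg k.cast_nonneg hh.1, hnh ▸ mul_le_mul_of_nonneg_right (Nat.cast_le.2 hk) hh.1⟩
  have hdist := fun k hk =>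
    backwardEuler_vlasovField_dist_le hEb hh.1 t x ξ ((hkh k hk).2.trans ht.2)
  have hmem : ∀ k ≤ n, (t - k * h, Q k) ∈ K := fun k hk => by
    obtain ⟨hkh₀, hkht⟩ := hkh k hk
    have hkh₁ := hkht.trans ht.2
    refine ⟨⟨sub_nonneg.2 hkht, (sub_le_self _ hkh₀).trans ht.2⟩, ?_, ?_⟩
    · exact mem_closedBall_iff_norm.2
        ((hdist k hk).1.trans (mul_le_of_le_one_right (by positivity) hkh₁))
    · exact mem_closedBall_iff_norm.2 ((hdist k hk).2.trans (mul_le_of_le_one_right hF hkh₁))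
  refine ⟨(Q n).1, (Q n).2, hnh ▸ (hdist n le_rfl).1, hnh ▸ (hdist n le_rfl).2, ?_⟩
  have := herr t (x, ξ) h n hh hmem
  rw [hnh, sub_self] at this
  exact this.trans (mul_le_of_le_one_right hε.le ht.2)

end Characteristics

section Transport

variable {E : Type*} [NormedAddCommGroup E] [InnerProductSpace ℝ E] [CompleteSpace E]

theorem fderiv_apply_vlasovField_eq_zero {f : ℝ → E → E → ℝ} {Ef : ℝ → E → E}
    (hf : Differentiable ℝ fun p : ℝ × E × E => f p.1 p.2.1 p.2.2)
    (hPDE : ∀ t x ξ, deriv (fun s => f s x ξ) t + ⟪ξ, gradient (fun y => f t y ξ) x⟫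
      + ⟪Ef t x, gradient (fun η => f t x η) ξ⟫ = 0) (q : ℝ × E × E) :
    fderiv ℝ (fun p : ℝ × E × E => f p.1 p.2.1 p.2.2) q (1, vlasovField Ef q) = 0 := by
  obtain ⟨s, y, η⟩ := q
  set P : ℝ × E × E → ℝ := fun p => f p.1 p.2.1 p.2.2
  have hslice : ∀ s, Differentiable ℝ fun w : E × E => P (s, w) := fun s =>
    hf.comp ((differentiable_const s).prodMk differentiable_id)
  have ht : deriv (fun s' => f s' y η) s = fderiv ℝ P (s, y, η) (1, 0) :=
    fderiv_prodMk_left_apply (P := P) (z := (y, η)) (hf _) 1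
  have hx : ⟪η, gradient (fun y' => f s y' η) y⟫ = fderiv ℝ P (s, y, η) (0, η, 0) := by
    rw [real_inner_comm, inner_gradient_left, ← fderiv_prodMk_right_apply (hf _)]
    exact fderiv_prodMk_left_apply (hslice s _) η
  have hξ : ⟪Ef s y, gradient (fun η' => f s y η') η⟫ = fderiv ℝ P (s, y, η) (0, 0, Ef s y) := by
    rw [real_inner_comm, inner_gradient_left, ← fderiv_prodMk_right_apply (hf _)]
    exact fderiv_prodMk_right_apply (hslice s _) (Ef s y)
  have hsplit : ((1 : ℝ), vlasovField Ef (s, y, η)) = (1, 0) + (0, η, 0) + (0, 0, Ef s y) := by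
    simp [vlasovField]
  have := hPDE s y η
  rw [ht, hx, hξ] at this
  rw [hsplit, map_add, map_add, this]

variable [FiniteDimensional ℝ E] {f : ℝ → E → E → ℝ} {Ef : ℝ → E → E} {φ a b : E → E → ℝ}
  {c F : ℝ} {n : ℕ} {t : ℝ}

theorem exists_abs_sub_le_and_abs_sub_le_of_transport
    (hf : ContDiff ℝ 1 fun p : ℝ × E × E => f p.1 p.2.1 p.2.2)
    (hE : Continuous fun p : ℝ × E => Ef p.1 p.2) (hEb : ∀ t x, ‖Ef t x‖ ≤ F)
    (hPV : ∀ q, fderiv ℝ (fun p : ℝ × E × E => f p.1 p.2.1 p.2.2) q (1, vlasovField Ef q) = 0)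
    (hφ : Differentiable ℝ fun q : E × E => φ q.1 q.2)
    (hdecay : ∀ x ξ, √(‖gradient (fun y => φ y ξ) x‖ ^ 2
      + ‖gradient (fun η => φ x η) ξ‖ ^ 2) ≤ c / (1 + ‖ξ‖ ^ n))
    (ht : t ∈ Set.Icc 0 1) (x ξ : E) {ε : ℝ} (hε : 0 < ε) :
    ∃ X Ξ : E, |f 0 X Ξ - f t x ξ| ≤ ε ∧
      |φ X Ξ - φ x ξ| ≤ t * (2 * shiftedDecay c F n ξ * (‖ξ‖ + F)) := by
  have hF : 0 ≤ F := (norm_nonneg _).trans (hEb 0 x)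
  obtain ⟨X, Ξ, hX, hΞ, hfX⟩ :=
    exists_abs_sub_le_of_fderiv_vlasovField_eq_zero hf hE hEb hPV ht x ξ hε
  refine ⟨X, Ξ, hfX, ?_⟩
  have hΞF : ‖Ξ - ξ‖ ≤ F := hΞ.trans (mul_le_of_le_one_right hF ht.2)
  have hmax : max ‖X - x‖ ‖Ξ - ξ‖ ≤ (‖ξ‖ + F) * t :=
    max_le hX (hΞ.trans (mul_le_mul_of_nonneg_right (le_add_of_nonneg_left (norm_nonneg ξ)) ht.1))
  calc |φ X Ξ - φ x ξ| ≤ 2 * shiftedDecay c F n ξ * ((‖ξ‖ + F) * t) :=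
        abs_sub_le_of_gradient_decay hφ hdecay hΞF hmax
    _ = _ := by ring

theorem pointwise_bounds_of_transport
    (hf : ContDiff ℝ 1 fun p : ℝ × E × E => f p.1 p.2.1 p.2.2)
    (hE : Continuous fun p : ℝ × E => Ef p.1 p.2) (hEb : ∀ t x, ‖Ef t x‖ ≤ F)
    (hPV : ∀ q, fderiv ℝ (fun p : ℝ × E × E => f p.1 p.2.1 p.2.2) q (1, vlasovField Ef q) = 0)
    (ha : Differentiable ℝ fun q : E × E => a q.1 q.2)
    (hb : Differentiable ℝ fun q : E × E => b q.1 q.2)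
    (hab : ∀ x ξ, a x ξ ≤ f 0 x ξ ∧ f 0 x ξ ≤ b x ξ)
    (ha' : ∀ x ξ, √(‖gradient (fun y => a y ξ) x‖ ^ 2
      + ‖gradient (fun η => a x η) ξ‖ ^ 2) ≤ c / (1 + ‖ξ‖ ^ n))
    (hb' : ∀ x ξ, √(‖gradient (fun y => b y ξ) x‖ ^ 2
      + ‖gradient (fun η => b x η) ξ‖ ^ 2) ≤ c / (1 + ‖ξ‖ ^ n))
    (ht : t ∈ Set.Icc 0 1) (x ξ : E) :
    a x ξ - t * (2 * shiftedDecay c F n ξ * (‖ξ‖ + F)) ≤ f t x ξ ∧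
      f t x ξ ≤ b x ξ + t * (2 * shiftedDecay c F n ξ * (‖ξ‖ + F)) := by
  constructor
  · refine le_of_forall_pos_le_add fun ε hε => ?_
    obtain ⟨X, Ξ, hfX, haX⟩ :=
      exists_abs_sub_le_and_abs_sub_le_of_transport hf hE hEb hPV ha ha' ht x ξ hε
    linarith [(abs_le.1 hfX).2, (abs_le.1 haX).1, (hab X Ξ).1]
  · refine le_of_forall_pos_le_add fun ε hε => ?_
    obtain ⟨X, Ξ, hfX, hbX⟩ :=
      exists_abs_sub_le_and_abs_sub_le_of_transport hf hE hEb hPV hb hb' ht x ξ hε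
    linarith [(abs_le.1 hfX).1, (abs_le.1 hbX).2, (hab X Ξ).2]

end Transport

theorem density_control_general (d : ℕ) (F c : ℝ) (hF : 0 < F) :
    ∃ R : ℝ, 0 < R ∧
      ∀ (T m M : ℝ)
        (f : ℝ → EuclideanSpace ℝ (Fin d) → EuclideanSpace ℝ (Fin d) → ℝ)
        (Efield : ℝ → EuclideanSpace ℝ (Fin d) → EuclideanSpace ℝ (Fin d))
        (a b : EuclideanSpace ℝ (Fin d) → EuclideanSpace ℝ (Fin d) → ℝ),
        0 < T → 0 < m →
        ContDiff ℝ 1 (fun p : ℝ × EuclideanSpace ℝ (Fin d) × EuclideanSpace ℝ (Fin d) =>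
          f p.1 p.2.1 p.2.2) →
        (∀ t ξ, ZPeriodic (fun x => f t x ξ)) →
        Continuous (fun p : ℝ × EuclideanSpace ℝ (Fin d) => Efield p.1 p.2) →
        (∀ t x, ‖Efield t x‖ ≤ F) →
        (∀ t x ξ,
          deriv (fun s => f s x ξ) t + ⟪ξ, gradient (fun y => f t y ξ) x⟫
            + ⟪Efield t x, gradient (fun η => f t x η) ξ⟫ = 0) →
        ContDiff ℝ 1 (fun q : EuclideanSpace ℝ (Fin d) × EuclideanSpace ℝ (Fin d) =>
          a q.1 q.2) →
        ContDiff ℝ 1 (fun q : EuclideanSpace ℝ (Fin d) × EuclideanSpace ℝ (Fin d) =>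
          b q.1 q.2) →
        (∀ x ξ, a x ξ ≤ f 0 x ξ ∧ f 0 x ξ ≤ b x ξ) →
        (∀ x ξ, Real.sqrt (‖gradient (fun y => a y ξ) x‖ ^ 2
            + ‖gradient (fun η => a x η) ξ‖ ^ 2) ≤ c / (1 + ‖ξ‖ ^ (d + 2))) →
        (∀ x ξ, Real.sqrt (‖gradient (fun y => b y ξ) x‖ ^ 2
            + ‖gradient (fun η => b x η) ξ‖ ^ 2) ≤ c / (1 + ‖ξ‖ ^ (d + 2))) →
        (∀ x, Integrable (a x)) → (∀ x, Integrable (b x)) →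
        (∀ t x, Integrable (f t x)) →
        (∀ x, m ≤ ∫ ξ, a x ξ) → (∀ x, (∫ ξ, b x ξ) ≤ M) →
        ∀ t ∈ Set.Icc (0:ℝ) (min T 1), ∀ x,
          (∫ ξ, a x ξ) - R * t ≤ (∫ ξ, f t x ξ)
          ∧ (∫ ξ, f t x ξ) ≤ (∫ ξ, b x ξ) + R * t := by
  set w : EuclideanSpace ℝ (Fin d) → ℝ := fun ξ => 2 * shiftedDecay c F (d + 2) ξ * (‖ξ‖ + F)
  have hw : Integrable w := by
    simpa only [w, mul_assoc] using (integrable_shiftedDecay_mul_norm_add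
      (E := EuclideanSpace ℝ (Fin d)) (μ := volume) (n := d + 1) (by simp) c hF.le).const_mul 2
  refine ⟨max (∫ ξ, w ξ) 1, lt_max_of_lt_right one_pos, ?_⟩
  intro T m M f Efield a b _ _ hf _ hE hEb hPDE ha hb hab ha' hb' haint hbint hfint _ _ t ht x
  have ht₁ : t ∈ Set.Icc 0 1 := ⟨ht.1, ht.2.trans (min_le_right _ _)⟩
  have hbounds := pointwise_bounds_of_transport hf hE hEb
    (fderiv_apply_vlasovField_eq_zero (hf.differentiable one_ne_zero) hPDE)
    (ha.differentiable one_ne_zero) (hb.differentiable one_ne_zero) hab ha' hb' ht₁ x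
  have hlow : ∫ ξ, (a x ξ - t * w ξ) ≤ ∫ ξ, f t x ξ :=
    integral_mono ((haint x).sub (hw.const_mul t)) (hfint t x) fun ξ => (hbounds ξ).1
  have hup : ∫ ξ, f t x ξ ≤ ∫ ξ, (b x ξ + t * w ξ) :=
    integral_mono (hfint t x) ((hbint x).add (hw.const_mul t)) fun ξ => (hbounds ξ).2
  rw [integral_sub (haint x) (hw.const_mul t), integral_const_mul] at hlow
  rw [integral_add (hbint x) (hw.const_mul t), integral_const_mul] at hup
  have hRt : t * ∫ ξ, w ξ ≤ max (∫ ξ, w ξ) 1 * t := by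
    rw [mul_comm]; exact mul_le_mul_of_nonneg_right (le_max_left _ _) ht.1
  exact ⟨by linarith, by linarith⟩

/-- control of the macroscopic density: if `f` is transported by
`∂_t f + ξ·∇_x f + E·∇_ξ f = 0` with `‖E‖_∞ ≤ F`, `a ≤ f(0) ≤ b` with
`|∇_{x,ξ}a|,|∇_{x,ξ}b| ≤ c/(1+|ξ|^{d+2})`, `ρ_a ≥ m > 0`, `ρ_b ≤ M`, then there is
`R = R(F,c,d) > 0` with `ρ_a(x) − Rt ≤ ρ(t,x) ≤ ρ_b(x) + Rt` for `t ∈ [0, min(T,1)]`. -/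
theorem density_control (d : ℕ) (F c : ℝ) (hF : 0 < F) (hc : 0 < c) :
    ∃ R : ℝ, 0 < R ∧
      ∀ (T m M : ℝ)
        (f : ℝ → EuclideanSpace ℝ (Fin d) → EuclideanSpace ℝ (Fin d) → ℝ)
        (Efield : ℝ → EuclideanSpace ℝ (Fin d) → EuclideanSpace ℝ (Fin d))
        (a b : EuclideanSpace ℝ (Fin d) → EuclideanSpace ℝ (Fin d) → ℝ),
        0 < T → 0 < m →
        ContDiff ℝ 1 (fun p : ℝ × EuclideanSpace ℝ (Fin d) × EuclideanSpace ℝ (Fin d) =>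
          f p.1 p.2.1 p.2.2) →
        (∀ t ξ, ZPeriodic (fun x => f t x ξ)) →
        Continuous (fun p : ℝ × EuclideanSpace ℝ (Fin d) => Efield p.1 p.2) →
        (∀ t x, ‖Efield t x‖ ≤ F) →
        (∀ t x ξ,
          deriv (fun s => f s x ξ) t + ⟪ξ, gradient (fun y => f t y ξ) x⟫
            + ⟪Efield t x, gradient (fun η => f t x η) ξ⟫ = 0) →
        ContDiff ℝ 1 (fun q : EuclideanSpace ℝ (Fin d) × EuclideanSpace ℝ (Fin d) =>
          a q.1 q.2) →
        ContDiff ℝ 1 (fun q : EuclideanSpace ℝ (Fin d) × EuclideanSpace ℝ (Fin d) =>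
          b q.1 q.2) →
        (∀ x ξ, a x ξ ≤ f 0 x ξ ∧ f 0 x ξ ≤ b x ξ) →
        (∀ x ξ, Real.sqrt (‖gradient (fun y => a y ξ) x‖ ^ 2
            + ‖gradient (fun η => a x η) ξ‖ ^ 2) ≤ c / (1 + ‖ξ‖ ^ (d + 2))) →
        (∀ x ξ, Real.sqrt (‖gradient (fun y => b y ξ) x‖ ^ 2
            + ‖gradient (fun η => b x η) ξ‖ ^ 2) ≤ c / (1 + ‖ξ‖ ^ (d + 2))) →
        (∀ x, Integrable (a x)) → (∀ x, Integrable (b x)) →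
        (∀ t x, Integrable (f t x)) →
        (∀ x, m ≤ ∫ ξ, a x ξ) → (∀ x, (∫ ξ, b x ξ) ≤ M) →
        ∀ t ∈ Set.Icc (0:ℝ) (min T 1), ∀ x,
          (∫ ξ, a x ξ) - R * t ≤ (∫ ξ, f t x ξ)
          ∧ (∫ ξ, f t x ξ) ≤ (∫ ξ, b x ξ) + R * t :=
  density_control_general d F c hF
end
end

section
/- Let Ω ⊂ ℝ^d be bounded, convex and open, and for each time t let ρ(t,·) be a compactly supported density with ∫ρ(t,·) = |Ω|, with Ψ(t,·) = Ψ[Ω,ρ(t,·)] the associated convex potential and E_p(t) = ∫(|x|²/2 − Ψ(t,x))ρ(t,x)dx + ∫_Ω(|y|²/2 − Φ(t,y))dy the potential energy. Then for any times t, t₀, E_p(t) − E_p(t₀) ≥ ∫(|x|²/2 − Ψ(t₀,x))(ρ(t,x) − ρ(t₀,x))dx. -/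
open MeasureTheory Real RealInnerProductSpace

noncomputable section

/-- one-sided inequality for the potential energy
`E_p(ρ) = ∫(|x|²/2 − Ψ)ρ + ∫_Ω(|y|²/2 − Φ)`: evaluating the dual (supremum)
representation of `E_p(ρ₁)` at the pair of potentials of `ρ₂` gives
`E_p(ρ₁) − E_p(ρ₂) ≥ ∫(|x|²/2 − Ψ₂)(ρ₁ − ρ₂)`.
Here each `(Φᵢ, Ψᵢ)` is an admissible Legendre pair (`Ψᵢ(x) + Φᵢ(y) ≥ x·y` on `ℝ^d × Ω̄`),
`Tᵢ = ∇Ψᵢ` realizes the equality on the support of `ρᵢ` and pushes `ρᵢ` forward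
to Lebesgue measure on `Ω`. -/
theorem potential_energy_onesided_inequality (d : ℕ)
    (Ω : Set (EuclideanSpace ℝ (Fin d)))
    (hΩo : IsOpen Ω) (hΩc : Convex ℝ Ω) (hΩb : Bornology.IsBounded Ω) (hΩne : Ω.Nonempty)
    (ρ1 ρ2 : EuclideanSpace ℝ (Fin d) → ℝ)
    (hρ1c : Continuous ρ1) (hρ2c : Continuous ρ2)
    (hρ1s : HasCompactSupport ρ1) (hρ2s : HasCompactSupport ρ2)
    (hρ1pos : ∀ x, 0 ≤ ρ1 x) (hρ2pos : ∀ x, 0 ≤ ρ2 x)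
    (Φ1 Ψ1 Φ2 Ψ2 : EuclideanSpace ℝ (Fin d) → ℝ)
    (hΦ1c : Continuous Φ1) (hΨ1c : Continuous Ψ1)
    (hΦ2c : Continuous Φ2) (hΨ2c : Continuous Ψ2)
    (T1 T2 : EuclideanSpace ℝ (Fin d) → EuclideanSpace ℝ (Fin d))
    (hT1c : Continuous T1) (hT2c : Continuous T2)
    (hadm1 : ∀ x, ∀ y ∈ closure Ω, ⟪x, y⟫ ≤ Ψ1 x + Φ1 y)
    (hadm2 : ∀ x, ∀ y ∈ closure Ω, ⟪x, y⟫ ≤ Ψ2 x + Φ2 y)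
    (heq1 : ∀ x, ρ1 x ≠ 0 → Ψ1 x + Φ1 (T1 x) = ⟪x, T1 x⟫ ∧ T1 x ∈ closure Ω)
    (heq2 : ∀ x, ρ2 x ≠ 0 → Ψ2 x + Φ2 (T2 x) = ⟪x, T2 x⟫ ∧ T2 x ∈ closure Ω)
    (hpush1 : ∀ g : EuclideanSpace ℝ (Fin d) → ℝ, Continuous g →
      ∫ x, g (T1 x) * ρ1 x = ∫ y in Ω, g y)
    (hpush2 : ∀ g : EuclideanSpace ℝ (Fin d) → ℝ, Continuous g →
      ∫ x, g (T2 x) * ρ2 x = ∫ y in Ω, g y) :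
    ((∫ x, (‖x‖ ^ 2 / 2 - Ψ1 x) * ρ1 x) + ∫ y in Ω, (‖y‖ ^ 2 / 2 - Φ1 y))
      - ((∫ x, (‖x‖ ^ 2 / 2 - Ψ2 x) * ρ2 x) + ∫ y in Ω, (‖y‖ ^ 2 / 2 - Φ2 y))
      ≥ ∫ x, (‖x‖ ^ 2 / 2 - Ψ2 x) * (ρ1 x - ρ2 x) := by
  have hqc : Continuous fun x : EuclideanSpace ℝ (Fin d) => ‖x‖ ^ 2 / 2 :=
    ((continuous_norm.pow 2).div_const 2)
  have hK : IsCompact (closure Ω) := Metric.isCompact_of_isClosed_isBounded isClosed_closure hΩb.closure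
  have hint1 : ∀ f : EuclideanSpace ℝ (Fin d) → ℝ, Continuous f →
      Integrable fun x => f x * ρ1 x := fun f hf =>
    (hf.mul hρ1c).integrable_of_hasCompactSupport (hρ1s.mul_left)
  have hint2 : ∀ f : EuclideanSpace ℝ (Fin d) → ℝ, Continuous f →
      Integrable fun x => f x * ρ2 x := fun f hf =>
    (hf.mul hρ2c).integrable_of_hasCompactSupport (hρ2s.mul_left)
  have hintΩ : ∀ f : EuclideanSpace ℝ (Fin d) → ℝ, Continuous f →
      IntegrableOn f Ω := fun f hf =>
    (hf.continuousOn.integrableOn_compact hK).mono_set subset_closure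
  have hpt : ∀ x, (Ψ1 x + Φ1 (T1 x)) * ρ1 x ≤ (Ψ2 x + Φ2 (T1 x)) * ρ1 x := by
    intro x
    rcases eq_or_ne (ρ1 x) 0 with h | h
    · simp [h]
    · obtain ⟨he, hmem⟩ := heq1 x h
      have h2 := hadm2 x (T1 x) hmem
      exact mul_le_mul_of_nonneg_right (by linarith) (hρ1pos x)
  have hmono : ∫ x, (Ψ1 x + Φ1 (T1 x)) * ρ1 x ≤ ∫ x, (Ψ2 x + Φ2 (T1 x)) * ρ1 x :=
    integral_mono (hint1 _ (hΨ1c.add (hΦ1c.comp hT1c)))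
      (hint1 _ (hΨ2c.add (hΦ2c.comp hT1c))) hpt
  have hsplit1 : ∫ x, (Ψ1 x + Φ1 (T1 x)) * ρ1 x
      = (∫ x, Ψ1 x * ρ1 x) + ∫ y in Ω, Φ1 y := by
    rw [← hpush1 Φ1 hΦ1c]
    simp only [add_mul]
    exact integral_add (hint1 _ hΨ1c) (hint1 _ (hΦ1c.comp hT1c))
  have hsplit2 : ∫ x, (Ψ2 x + Φ2 (T1 x)) * ρ1 x
      = (∫ x, Ψ2 x * ρ1 x) + ∫ y in Ω, Φ2 y := by
    rw [← hpush1 Φ2 hΦ2c]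
    simp only [add_mul]
    exact integral_add (hint1 _ hΨ2c) (hint1 _ (hΦ2c.comp hT1c))
  have hmain : (∫ x, Ψ1 x * ρ1 x) + ∫ y in Ω, Φ1 y
      ≤ (∫ x, Ψ2 x * ρ1 x) + ∫ y in Ω, Φ2 y := by
    rw [← hsplit1, ← hsplit2]; exact hmono
  have e11 : ∫ x, (‖x‖ ^ 2 / 2 - Ψ1 x) * ρ1 x
      = (∫ x, ‖x‖ ^ 2 / 2 * ρ1 x) - ∫ x, Ψ1 x * ρ1 x := by
    simp only [sub_mul]
    exact integral_sub (hint1 _ hqc) (hint1 _ hΨ1c)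
  have e21 : ∫ x, (‖x‖ ^ 2 / 2 - Ψ2 x) * ρ1 x
      = (∫ x, ‖x‖ ^ 2 / 2 * ρ1 x) - ∫ x, Ψ2 x * ρ1 x := by
    simp only [sub_mul]
    exact integral_sub (hint1 _ hqc) (hint1 _ hΨ2c)
  have e22 : ∫ x, (‖x‖ ^ 2 / 2 - Ψ2 x) * ρ2 x
      = (∫ x, ‖x‖ ^ 2 / 2 * ρ2 x) - ∫ x, Ψ2 x * ρ2 x := by
    simp only [sub_mul]
    exact integral_sub (hint2 _ hqc) (hint2 _ hΨ2c)
  have eΩ1 : ∫ y in Ω, (‖y‖ ^ 2 / 2 - Φ1 y)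
      = (∫ y in Ω, ‖y‖ ^ 2 / 2) - ∫ y in Ω, Φ1 y :=
    integral_sub (hintΩ _ hqc) (hintΩ _ hΦ1c)
  have eΩ2 : ∫ y in Ω, (‖y‖ ^ 2 / 2 - Φ2 y)
      = (∫ y in Ω, ‖y‖ ^ 2 / 2) - ∫ y in Ω, Φ2 y :=
    integral_sub (hintΩ _ hqc) (hintΩ _ hΦ2c)
  have eR : ∫ x, (‖x‖ ^ 2 / 2 - Ψ2 x) * (ρ1 x - ρ2 x)
      = (∫ x, (‖x‖ ^ 2 / 2 - Ψ2 x) * ρ1 x) - ∫ x, (‖x‖ ^ 2 / 2 - Ψ2 x) * ρ2 x := by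
    simp only [mul_sub]
    exact integral_sub (hint1 _ (hqc.sub hΨ2c)) (hint2 _ (hqc.sub hΨ2c))
  rw [ge_iff_le, eR, e11, e21, e22, eΩ1, eΩ2]
  linarith
end
end

section
/- Let v(t,x) be a C¹ solution of the incompressible Euler equations ∂_t v + (v·∇)v = −∇p, div v = 0 on [0,T] × 𝕋^d, and let f(t,x,ξ) be a smooth compactly supported solution of the kinetic equation ∂_t f + ξ·∇_x f − (1/ε)∇φ̃·∇_ξ f = 0 whose total energy E(t) = (1/2)∫ f|ξ|² dxdξ + (1/2)∫ρ|∇φ̃|²dx is conserved. Then the modulated kinetic energy satisfies the identity d/dt [ (1/2)∫ f(t,x,ξ)|ξ − v(t,x)|² dxdξ + (1/2)∫ρ|∇φ̃|²dx ] = −∫ f·(ξ−v)·(∇v)(ξ−v) dxdξ + (1/ε)∫ f v·∇φ̃ dxdξ − ∫ f (v−ξ)·∇p dxdξ. -/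
/-!
Since `‖ξ - v‖² = ‖ξ‖² + 2 (‖v‖²/2 - ⟪ξ, v⟫)`, the modulated energy is the conserved total
energy plus `∫∫ f w` with the weight `w = ‖v‖²/2 - ⟪ξ, v⟫`, so only the latter has to be
differentiated. Under the integral sign, the kinetic equation for `∂ₜ f` and the Euler
equation for `∂ₜ v` turn `∂ₜ (f w)` into the integrand of the right-hand side plus the two
total derivatives `-ξ · ∇ₓ (f w)` and `(1/ε) ∇φ̃ · ∇_ξ (f w)`. The first integrates to zero
over the torus by periodicity, the second over velocity space by compact support.
-/

open MeasureTheory Real RealInnerProductSpace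

noncomputable section

open Set Metric Topology

theorem setIntegral_Icc_fderiv_single_eq_zero {n : ℕ} {H : (Fin (n + 1) → ℝ) → ℝ}
    (hH : ContDiff ℝ 1 H) (i : Fin (n + 1))
    (hper : ∀ y, H (i.insertNth 1 y) = H (i.insertNth 0 y)) :
    ∫ x in Icc 0 1, fderiv ℝ H x (Pi.single i 1) = 0 := by
  classical
  have hdiff := hH.differentiable one_ne_zero
  have hdiv : ∀ x, ∑ j, (Pi.single i (fderiv ℝ H x) : Fin (n + 1) → _) j (Pi.single j 1)
      = fderiv ℝ H x (Pi.single i 1) := fun x => by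
    rw [Finset.sum_eq_single i (fun j _ hj => by simp [hj]) (by simp)]
    simp
  -- Divergence theorem for the field `H eᵢ`: only the two faces orthogonal to `eᵢ` contribute.
  have key := integral_divergence_of_hasFDerivAt_off_countable' (0 : Fin (n + 1) → ℝ) 1
    zero_le_one (Pi.single i H) (fun j x => (Pi.single i (fderiv ℝ H x) : Fin (n + 1) → _) j)
    ∅ countable_empty
    (fun j => by
      rcases eq_or_ne j i with rfl | hj
      · simpa using hH.continuous.continuousOn
      · rw [Pi.single_eq_of_ne hj]; exact continuousOn_const)
    (fun x _ j => by
      rcases eq_or_ne j i with rfl | hj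
      · simpa using (hdiff x).hasFDerivAt
      · rw [Pi.single_eq_of_ne hj, Pi.single_eq_of_ne hj]; exact hasFDerivAt_const 0 x)
    (by
      simp_rw [hdiv]
      exact ((hH.continuous_fderiv one_ne_zero).clm_apply continuous_const).continuousOn
        |>.integrableOn_compact isCompact_Icc)
  simp_rw [hdiv] at key
  rw [key, Finset.sum_eq_single i (fun j _ hj => by simp [hj]) (by simp)]
  simp [hper]

theorem integral_fderiv_apply_eq_zero {X : Type*} [NormedAddCommGroup X] [NormedSpace ℝ X]
    [FiniteDimensional ℝ X] [MeasurableSpace X] [BorelSpace X] {μ : Measure X}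
    [μ.IsAddHaarMeasure] {g : X → ℝ} (hg : Differentiable ℝ g) (hgi : Integrable g μ) {v : X}
    (hg'i : Integrable (fun x => fderiv ℝ g x v) μ) :
    ∫ x, fderiv ℝ g x v ∂μ = 0 := by
  simpa using integral_mul_fderiv_eq_neg_fderiv_mul_of_integrable (μ := μ) (v := v)
    (f := fun _ => (1 : ℝ)) (by simp) (by simpa using hg'i) (by simpa using hgi)
    (fun _ _ => differentiableAt_const _) (fun x _ => hg x)

theorem fderiv_eq_zero_of_forall_norm_gt {X Y : Type*} [NormedAddCommGroup X]
    [NormedSpace ℝ X] [NormedAddCommGroup Y] [NormedSpace ℝ Y] {g : X → Y} {K : ℝ}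
    (hg : ∀ η, K < ‖η‖ → g η = 0) {ξ : X} (hξ : K < ‖ξ‖) : fderiv ℝ g ξ = 0 := by
  have hev : g =ᶠ[𝓝 ξ] fun _ => 0 :=
    Filter.eventuallyEq_of_mem ((isOpen_lt continuous_const continuous_norm).mem_nhds hξ) hg
  rw [hev.fderiv_eq, fderiv_const_apply]

theorem hasDerivAt_setIntegral_of_contDiff {X : Type*} [NormedAddCommGroup X]
    [NormedSpace ℝ X] [MeasurableSpace X] [OpensMeasurableSpace X] {μ : Measure X}
    [IsFiniteMeasureOnCompacts μ] {S C : Set X} (hS : MeasurableSet S) (hC : IsCompact C)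
    (hSC : S ⊆ C) {F : ℝ → X → ℝ} (hF : ContDiff ℝ 1 (Function.uncurry F)) (t : ℝ) :
    HasDerivAt (fun s => ∫ x in S, F s x ∂μ) (∫ x in S, deriv (F · x) t ∂μ) t := by
  set F' : ℝ × X → ℝ := fun z => fderiv ℝ (Function.uncurry F) z (1, 0)
  have hF'c : Continuous F' := (hF.continuous_fderiv one_ne_zero).clm_apply continuous_const
  have hderiv : ∀ s x, HasDerivAt (F · x) (F' (s, x)) s := fun s x =>
    (hF.differentiable one_ne_zero (s, x)).hasFDerivAt.comp_hasDerivAt (x := s)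
      (f := fun r => (r, x)) ((hasDerivAt_id s).prodMk (hasDerivAt_const s x))
  have hslice : ∀ s, Continuous (F s) := fun s =>
    hF.continuous.comp (continuous_const.prodMk continuous_id)
  obtain ⟨M, hM⟩ := (isCompact_Icc (a := t - 1) (b := t + 1)).prod hC
    |>.exists_bound_of_continuousOn hF'c.continuousOn
  have hμS : μ S ≠ ⊤ := (measure_mono hSC).trans_lt hC.measure_lt_top |>.ne
  have key := hasDerivAt_integral_of_dominated_loc_of_deriv_le (μ := μ.restrict S)
    (F' := fun s x => F' (s, x)) (bound := fun _ => M) (ball_mem_nhds t one_pos)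
    (.of_forall fun s => (hslice s).aestronglyMeasurable)
    ((hslice t).continuousOn.integrableOn_compact hC |>.mono_set hSC)
    (hF'c.comp (continuous_const.prodMk continuous_id)).aestronglyMeasurable
    (by
      filter_upwards [ae_restrict_mem hS] with x hx s hs
      rw [mem_ball, Real.dist_eq, abs_sub_lt_iff] at hs
      exact hM (s, x) ⟨⟨by linarith, by linarith⟩, hSC hx⟩)
    (integrableOn_const hμS)
    (.of_forall fun x s _ => hderiv s x)
  simpa only [(hderiv t _).deriv] using key.2

theorem ContDiff.continuous_gradient {F : Type*} [NormedAddCommGroup F] [InnerProductSpace ℝ F]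
    [CompleteSpace F] {h : F → ℝ} (hh : ContDiff ℝ 1 h) : Continuous (gradient h) :=
  (InnerProductSpace.toDual ℝ F).symm.continuous.comp (hh.continuous_fderiv one_ne_zero)

section Torus

variable {d : ℕ}

theorem toLp_preimage_fundDom :
    WithLp.toLp 2 ⁻¹' fundDom d = univ.pi fun _ : Fin d => Ioc (0 : ℝ) 1 := by
  ext; simp [fundDom]

theorem measurableSet_fundDom : MeasurableSet (fundDom d) := by
  have : fundDom d = WithLp.ofLp ⁻¹' univ.pi fun _ : Fin d => Ioc (0 : ℝ) 1 := by
    ext; simp [fundDom]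
  rw [this]
  exact (MeasurableSet.univ_pi fun _ => measurableSet_Ioc).preimage (by fun_prop)

theorem fundDom_subset_closedBall : fundDom d ⊆ closedBall 0 √d := by
  intro x hx
  rw [mem_closedBall_zero_iff, EuclideanSpace.norm_eq]
  refine Real.sqrt_le_sqrt ?_
  calc ∑ i, ‖x i‖ ^ 2 ≤ ∑ _i : Fin d, (1 : ℝ) :=
        Finset.sum_le_sum fun i _ => by
          rw [Real.norm_eq_abs, sq_abs]; nlinarith [(hx i).1, (hx i).2]
    _ = d := by simp

theorem ZPeriodic.apply_toLp_insertNth_one {n : ℕ} {h : EuclideanSpace ℝ (Fin (n + 1)) → ℝ}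
    (hper : ZPeriodic h) (i : Fin (n + 1)) (y : Fin n → ℝ) :
    h (WithLp.toLp 2 (i.insertNth 1 y)) = h (WithLp.toLp 2 (i.insertNth 0 y)) := by
  classical
  conv_rhs => rw [← hper _ (Pi.single i 1)]
  congr 2
  ext j
  rcases eq_or_ne j i with rfl | hj
  · simp
  · obtain ⟨k, rfl⟩ := Fin.exists_succAbove_eq hj
    simp [hj]

theorem ZPeriodic.setIntegral_fderiv_eq_zero {h : EuclideanSpace ℝ (Fin d) → ℝ}
    (hper : ZPeriodic h) (hh : ContDiff ℝ 1 h) (w : EuclideanSpace ℝ (Fin d)) :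
    ∫ x in fundDom d, fderiv ℝ h x w = 0 := by
  classical
  set e := (PiLp.continuousLinearEquiv 2 ℝ fun _ : Fin d => ℝ).symm
  have hchain : ∀ y u, fderiv ℝ h (e y) (e u) = fderiv ℝ (h ∘ e) y u := fun y u => by
    rw [e.comp_right_fderiv]; rfl
  have hsingle : ∀ i, ∫ y in Icc 0 1, fderiv ℝ (h ∘ e) y (Pi.single i 1) = 0 := fun i => by
    obtain ⟨n, rfl⟩ : ∃ n, d = n + 1 := ⟨d - 1, (Nat.succ_pred_eq_of_pos i.pos).symm⟩
    exact setIntegral_Icc_fderiv_single_eq_zero (hh.comp e.contDiff) i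
      (hper.apply_toLp_insertNth_one i)
  calc ∫ x in fundDom d, fderiv ℝ h x w
      = ∫ y in univ.pi fun _ => Ioc 0 1, fderiv ℝ (h ∘ e) y (WithLp.ofLp w) := by
        rw [← toLp_preimage_fundDom,
          ← (PiLp.volume_preserving_toLp (Fin d)).setIntegral_preimage_emb
            (MeasurableEquiv.toLp 2 _).measurableEmbedding]
        exact setIntegral_congr_fun (measurableSet_fundDom.preimage (by fun_prop))
          fun y _ => hchain y (WithLp.ofLp w)
    _ = ∫ y in Icc 0 1, ∑ i, w i * fderiv ℝ (h ∘ e) y (Pi.single i 1) := by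
        rw [volume_pi, setIntegral_congr_set Measure.univ_pi_Ioc_ae_eq_Icc]
        refine setIntegral_congr_fun measurableSet_Icc fun y _ => ?_
        conv_lhs => rw [pi_eq_sum_univ' (WithLp.ofLp w)]
        simp
    _ = 0 := by
        rw [integral_finsetSum]
        · simp [integral_const_mul, hsingle]
        · exact fun i _ => (((hh.comp e.contDiff).continuous_fderiv one_ne_zero).clm_apply
            continuous_const).integrableOn_Icc.const_mul _

end Torus

theorem prod_univ_diff_prod_closedBall_subset {X Y : Type*} [SeminormedAddCommGroup Y]
    (s : Set X) (K : ℝ) : (s ×ˢ univ) \ (s ×ˢ closedBall (0 : Y) K) ⊆ {q | K < ‖q.2‖} := by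
  rintro q ⟨⟨hx, -⟩, hq⟩
  simpa [hx] using hq

section PhaseSpace

variable {d : ℕ} {K : ℝ}

local notation "E" => EuclideanSpace ℝ (Fin d)

/-- Lebesgue measure on the phase space `𝕋^d × ℝ^d`, the torus being realised as `fundDom d`. -/
def phaseMeasure (d : ℕ) : Measure (EuclideanSpace ℝ (Fin d) × EuclideanSpace ℝ (Fin d)) :=
  (volume.restrict (fundDom d)).prod volume

theorem phaseMeasure_eq_restrict : phaseMeasure d = volume.restrict (fundDom d ×ˢ univ) := by
  rw [Measure.volume_eq_prod, ← Measure.prod_restrict, Measure.restrict_univ]; rfl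

theorem integral_phaseMeasure {F : E × E → ℝ} (hF : Integrable F (phaseMeasure d)) :
    ∫ q, F q ∂phaseMeasure d = ∫ x in fundDom d, ∫ ξ, F (x, ξ) :=
  integral_prod F hF

theorem integrable_phaseMeasure {F : E × E → ℝ} (hF : Continuous F)
    (hK : ∀ q : E × E, K < ‖q.2‖ → F q = 0) : Integrable F (phaseMeasure d) := by
  rw [phaseMeasure_eq_restrict]
  refine IntegrableOn.of_forall_sdiff_eq_zero ?_ (measurableSet_fundDom.prod .univ)
    fun q hq => hK q (prod_univ_diff_prod_closedBall_subset _ K hq)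
  exact (hF.continuousOn.integrableOn_compact ((isCompact_closedBall 0 √d).prod
    (isCompact_closedBall 0 K))).mono_set (prod_mono fundDom_subset_closedBall subset_rfl)

theorem integral_phaseMeasure_eq_setIntegral {F : E × E → ℝ}
    (hK : ∀ q : E × E, K < ‖q.2‖ → F q = 0) :
    ∫ q, F q ∂phaseMeasure d = ∫ q in fundDom d ×ˢ closedBall 0 K, F q := by
  rw [phaseMeasure_eq_restrict]
  exact setIntegral_eq_of_subset_of_forall_sdiff_eq_zero (measurableSet_fundDom.prod .univ)
    (prod_mono subset_rfl (subset_univ _))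
    fun q hq => hK q (prod_univ_diff_prod_closedBall_subset _ K hq)

theorem hasDerivAt_integral_phaseMeasure {F : ℝ → E × E → ℝ}
    (hF : ContDiff ℝ 1 (Function.uncurry F)) (hK : ∀ s (q : E × E), K < ‖q.2‖ → F s q = 0)
    (t : ℝ) :
    HasDerivAt (fun s => ∫ q, F s q ∂phaseMeasure d)
      (∫ q, deriv (F · q) t ∂phaseMeasure d) t := by
  have hK' : ∀ q : E × E, K < ‖q.2‖ → deriv (F · q) t = 0 := fun q hq => by
    simp [hK _ q hq]
  simp only [integral_phaseMeasure_eq_setIntegral (hK _), integral_phaseMeasure_eq_setIntegral hK']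
  exact hasDerivAt_setIntegral_of_contDiff (measurableSet_fundDom.prod measurableSet_closedBall)
    ((isCompact_closedBall 0 √d).prod (isCompact_closedBall 0 K))
    (prod_mono fundDom_subset_closedBall subset_rfl) hF t

variable {W : EuclideanSpace ℝ (Fin d) → EuclideanSpace ℝ (Fin d) → ℝ}

theorem integrable_phaseMeasure_fderiv_fst (hW : ContDiff ℝ 1 (Function.uncurry W))
    (hK : ∀ x ξ, K < ‖ξ‖ → W x ξ = 0) :
    Integrable (fun q : E × E => fderiv ℝ (W · q.2) q.1 q.2) (phaseMeasure d) := by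
  refine integrable_phaseMeasure ?_ (K := K) fun q hq => ?_
  · have hpartial : ContDiff ℝ 0 fun q : E × E => fderiv ℝ (W · q.2) q.1 :=
      ContDiff.fderiv (m := 1) (f := fun (q : E × E) y => W y q.2)
        (hW.comp (contDiff_snd.prodMk (contDiff_snd.comp contDiff_fst))) contDiff_fst (by simp)
    exact hpartial.continuous.clm_apply continuous_snd
  · have : (W · q.2) = 0 := funext fun y => hK y q.2 hq
    simp [this]

theorem integrable_phaseMeasure_fderiv_snd (hW : ContDiff ℝ 1 (Function.uncurry W))
    {c : E → E} (hc : Continuous c) (hK : ∀ x ξ, K < ‖ξ‖ → W x ξ = 0) :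
    Integrable (fun q : E × E => fderiv ℝ (W q.1) q.2 (c q.1)) (phaseMeasure d) := by
  refine integrable_phaseMeasure ?_ (K := K) fun q hq => ?_
  · have hpartial : ContDiff ℝ 0 fun q : E × E => fderiv ℝ (W q.1) q.2 :=
      ContDiff.fderiv (m := 1) (f := fun (q : E × E) => W q.1)
        (hW.comp ((contDiff_fst.comp contDiff_fst).prodMk contDiff_snd)) contDiff_snd (by simp)
    exact hpartial.continuous.clm_apply (hc.comp continuous_fst)
  · simp [fderiv_eq_zero_of_forall_norm_gt (hK q.1) hq]

theorem integral_phaseMeasure_fderiv_fst_eq_zero (hW : ContDiff ℝ 1 (Function.uncurry W))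
    (hper : ∀ ξ, ZPeriodic (W · ξ)) (hK : ∀ x ξ, K < ‖ξ‖ → W x ξ = 0) :
    ∫ q, fderiv ℝ (W · q.2) q.1 q.2 ∂phaseMeasure d = 0 := by
  rw [phaseMeasure, integral_prod_symm _ (integrable_phaseMeasure_fderiv_fst hW hK)]
  refine integral_eq_zero_of_ae (.of_forall fun ξ => ?_)
  exact (hper ξ).setIntegral_fderiv_eq_zero (hW.comp (contDiff_id.prodMk contDiff_const)) ξ

theorem integral_phaseMeasure_fderiv_snd_eq_zero (hW : ContDiff ℝ 1 (Function.uncurry W))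
    {c : E → E} (hc : Continuous c) (hK : ∀ x ξ, K < ‖ξ‖ → W x ξ = 0) :
    ∫ q, fderiv ℝ (W q.1) q.2 (c q.1) ∂phaseMeasure d = 0 := by
  rw [integral_phaseMeasure (integrable_phaseMeasure_fderiv_snd hW hc hK)]
  refine integral_eq_zero_of_ae (.of_forall fun x => ?_)
  have hWx : ContDiff ℝ 1 (W x) := hW.comp (contDiff_const.prodMk contDiff_id)
  have hcs : HasCompactSupport (W x) :=
    .intro (isCompact_closedBall 0 K) fun η hη => hK x η (by simpa using hη)
  have hWx' : Continuous fun η => fderiv ℝ (W x) η (c x) :=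
    (hWx.continuous_fderiv one_ne_zero).clm_apply continuous_const
  exact integral_fderiv_apply_eq_zero (hWx.differentiable one_ne_zero)
    (hWx.continuous.integrable_of_hasCompactSupport hcs)
    (hWx'.integrable_of_hasCompactSupport (hcs.fderiv_apply ℝ (c x)))

theorem integral_phaseMeasure_neg_fderiv_fst_add_fderiv_snd_add
    (hW : ContDiff ℝ 1 (Function.uncurry W)) (hper : ∀ ξ, ZPeriodic (W · ξ))
    (hK : ∀ x ξ, K < ‖ξ‖ → W x ξ = 0) {c : E → E} (hc : Continuous c) (a : ℝ)
    {T : E × E → ℝ} (hT : Integrable T (phaseMeasure d)) :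
    ∫ q, (-fderiv ℝ (W · q.2) q.1 q.2 + a * fderiv ℝ (W q.1) q.2 (c q.1) + T q) ∂phaseMeasure d
      = ∫ q, T q ∂phaseMeasure d := by
  have hfst := (integrable_phaseMeasure_fderiv_fst hW hK).fun_neg
  have hsnd := (integrable_phaseMeasure_fderiv_snd hW hc hK).const_mul a
  rw [integral_add (hfst.fun_add hsnd) hT, integral_add hfst hsnd, integral_neg,
    integral_const_mul, integral_phaseMeasure_fderiv_fst_eq_zero hW hper hK,
    integral_phaseMeasure_fderiv_snd_eq_zero hW hc hK]
  simp

end PhaseSpace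

section ModulationWeight

variable {F : Type*} [NormedAddCommGroup F] [InnerProductSpace ℝ F]

def modulationWeight (u ξ : F) : ℝ := ‖u‖ ^ 2 / 2 - ⟪ξ, u⟫

theorem norm_sub_sq_eq_add_modulationWeight (u ξ : F) :
    ‖ξ - u‖ ^ 2 = ‖ξ‖ ^ 2 + 2 * modulationWeight u ξ := by
  rw [modulationWeight, norm_sub_sq_real]; ring

@[fun_prop]
theorem ContDiff.modulationWeight {X : Type*} [NormedAddCommGroup X] [NormedSpace ℝ X]
    {n : WithTop ℕ∞} {u ξ : X → F} (hu : ContDiff ℝ n u) (hξ : ContDiff ℝ n ξ) :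
    ContDiff ℝ n fun x => modulationWeight (u x) (ξ x) :=
  ((hu.norm_sq ℝ).div_const 2).sub (hξ.inner ℝ hu)

@[fun_prop]
theorem Continuous.modulationWeight {X : Type*} [TopologicalSpace X] {u ξ : X → F}
    (hu : Continuous u) (hξ : Continuous ξ) :
    Continuous fun x => modulationWeight (u x) (ξ x) := by
  unfold _root_.modulationWeight; fun_prop

theorem HasFDerivAt.modulationWeight_left {X : Type*} [NormedAddCommGroup X] [NormedSpace ℝ X]
    {u : X → F} {u' : X →L[ℝ] F} {x : X} (hu : HasFDerivAt u u' x) (ξ : F) :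
    HasFDerivAt (fun y => modulationWeight (u y) ξ) ((innerSL ℝ (u x - ξ)).comp u') x := by
  refine (((HasFDerivAt.mul_const hu.norm_sq (1 / 2)).sub
    ((hasFDerivAt_const ξ x).inner ℝ hu)).congr_fderiv ?_).congr_of_eventuallyEq
    (.of_forall fun y => ?_)
  · ext w; simp
  · simp [modulationWeight]; ring

theorem HasDerivAt.modulationWeight_left {u : ℝ → F} {u' : F} {t : ℝ} (hu : HasDerivAt u u' t)
    (ξ : F) : HasDerivAt (fun s => modulationWeight (u s) ξ) ⟪u t - ξ, u'⟫ t := by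
  simpa [inner_sub_left] using (hu.hasFDerivAt.modulationWeight_left ξ).hasDerivAt

theorem hasFDerivAt_modulationWeight_right (u ξ : F) :
    HasFDerivAt (modulationWeight u) (-innerSL ℝ u) ξ := by
  refine (((innerSL ℝ u).hasFDerivAt (x := ξ)).const_sub (‖u‖ ^ 2 / 2)).congr_of_eventuallyEq
    (.of_forall fun η => ?_)
  simp [modulationWeight, real_inner_comm]

theorem deriv_mul_modulationWeight [CompleteSpace F] {ε : ℝ} {f : ℝ → F → F → ℝ}
    {v : ℝ → F → F} {t : ℝ} {x ξ g P : F} (hft : DifferentiableAt ℝ (fun s => f s x ξ) t)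
    (hfx : DifferentiableAt ℝ (fun y => f t y ξ) x) (hfξ : DifferentiableAt ℝ (f t x) ξ)
    (hvt : DifferentiableAt ℝ (fun s => v s x) t) (hvx : DifferentiableAt ℝ (v t) x)
    (hEuler : deriv (fun s => v s x) t + fderiv ℝ (fun y => v t y) x (v t x) = -P)
    (hPDE : deriv (fun s => f s x ξ) t + ⟪ξ, gradient (fun y => f t y ξ) x⟫
      - (1 / ε) * ⟪g, gradient (fun η => f t x η) ξ⟫ = 0) :
    deriv (fun s => f s x ξ * modulationWeight (v s x) ξ) t
      = -fderiv ℝ (fun y => f t y ξ * modulationWeight (v t y) ξ) x ξ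
        + (1 / ε) * fderiv ℝ (fun η => f t x η * modulationWeight (v t x) η) ξ g
        + (-(f t x ξ * ⟪ξ - v t x, fderiv ℝ (fun y => v t y) x (ξ - v t x)⟫)
          + (1 / ε) * (f t x ξ * ⟪v t x, g⟫)
          - f t x ξ * ⟪v t x - ξ, P⟫) := by
  have hwx := hvx.hasFDerivAt.modulationWeight_left ξ
  have hwξ := hasFDerivAt_modulationWeight_right (v t x) ξ
  rw [(hft.hasDerivAt.fun_mul (hvt.hasDerivAt.modulationWeight_left ξ)).deriv,
    fderiv_fun_mul hfx hwx.differentiableAt, fderiv_fun_mul hfξ hwξ.differentiableAt,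
    hwx.fderiv, hwξ.fderiv]
  rw [inner_gradient_right, inner_gradient_right] at hPDE
  have hft' : deriv (fun s => f s x ξ) t
      = -fderiv ℝ (fun y => f t y ξ) x ξ + (1 / ε) * fderiv ℝ (f t x) ξ g := by
    simp only [conj_trivial] at hPDE; linarith
  rw [hft', eq_sub_of_add_eq hEuler]
  simp only [add_apply, sub_apply, smul_apply, ContinuousLinearMap.comp_apply, neg_apply,
    innerSL_apply_apply, smul_eq_mul, map_sub, inner_sub_left, inner_sub_right, inner_neg_right,
    real_inner_comm g]
  ring

end ModulationWeight

section ModulatedEnergy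

variable {d : ℕ}

local notation "E" => EuclideanSpace ℝ (Fin d)

theorem integral_mul_norm_sub_sq_eq {f : E → E → ℝ} {u : E → E}
    (hf : Continuous fun q : E × E => f q.1 q.2) (hu : Continuous u) {K : ℝ}
    (hK : ∀ x ξ, K < ‖ξ‖ → f x ξ = 0) :
    ∫ x in fundDom d, ∫ ξ, f x ξ * ‖ξ - u x‖ ^ 2
      = (∫ x in fundDom d, ∫ ξ, f x ξ * ‖ξ‖ ^ 2)
        + 2 * ∫ q, f q.1 q.2 * modulationWeight (u q.1) q.2 ∂phaseMeasure d := by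
  have hint : ∀ G : E × E → ℝ, Continuous G →
      Integrable (fun q => f q.1 q.2 * G q) (phaseMeasure d) := fun G hG =>
    integrable_phaseMeasure (hf.mul hG) (K := K) fun q hq => by simp [hK _ _ hq]
  have hkin := hint (fun q => ‖q.2‖ ^ 2) (by fun_prop)
  have hw := hint (fun q => modulationWeight (u q.1) q.2) (by fun_prop)
  rw [← integral_phaseMeasure (hint (fun q => ‖q.2 - u q.1‖ ^ 2) (by fun_prop)),
    ← integral_phaseMeasure hkin, ← integral_const_mul, ← integral_add hkin (hw.const_mul 2)]
  congr 1 with q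
  rw [norm_sub_sq_eq_add_modulationWeight]; ring

theorem integral_deriv_mul_modulationWeight {ε : ℝ} {v : ℝ → E → E} {p : ℝ → E → ℝ}
    {f : ℝ → E → E → ℝ} {φt : ℝ → E → ℝ}
    (hv : ContDiff ℝ 1 (fun q : ℝ × E => v q.1 q.2))
    (hp : ContDiff ℝ 1 (fun q : ℝ × E => p q.1 q.2))
    (hf : ContDiff ℝ 1 (fun q : ℝ × E × E => f q.1 q.2.1 q.2.2))
    (hφ : ContDiff ℝ 1 (fun q : ℝ × E => φt q.1 q.2))
    (hvper : ∀ t, ZPeriodic (v t)) (hfper : ∀ t ξ, ZPeriodic (fun x => f t x ξ))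
    {K : ℝ} (hK : ∀ t x ξ, K < ‖ξ‖ → f t x ξ = 0)
    (hEuler : ∀ t x,
      deriv (fun s => v s x) t + fderiv ℝ (fun y => v t y) x (v t x)
        = -gradient (fun y => p t y) x)
    (hPDE : ∀ t x ξ,
      deriv (fun s => f s x ξ) t + ⟪ξ, gradient (fun y => f t y ξ) x⟫
        - (1/ε) * ⟪gradient (fun y => φt t y) x, gradient (fun η => f t x η) ξ⟫ = 0)
    (t : ℝ) :
    ∫ q, deriv (fun s => f s q.1 q.2 * modulationWeight (v s q.1) q.2) t ∂phaseMeasure d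
      = -(∫ x in fundDom d, ∫ ξ, f t x ξ *
              ⟪ξ - v t x, fderiv ℝ (fun y => v t y) x (ξ - v t x)⟫)
          + (1/ε) * (∫ x in fundDom d, ∫ ξ, f t x ξ *
              ⟪v t x, gradient (fun y => φt t y) x⟫)
          - ∫ x in fundDom d, ∫ ξ, f t x ξ *
              ⟪v t x - ξ, gradient (fun y => p t y) x⟫ := by
  set W : E → E → ℝ := fun x ξ => f t x ξ * modulationWeight (v t x) ξ
  have hvt : ContDiff ℝ 1 (v t) := hv.comp (contDiff_const.prodMk contDiff_id)
  have hft : ContDiff ℝ 1 fun q : E × E => f t q.1 q.2 :=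
    hf.comp (contDiff_const.prodMk contDiff_id)
  have hgradφ : Continuous (gradient fun y => φt t y) :=
    ContDiff.continuous_gradient (hφ.comp (contDiff_const.prodMk contDiff_id))
  have hgradp : Continuous (gradient fun y => p t y) :=
    ContDiff.continuous_gradient (hp.comp (contDiff_const.prodMk contDiff_id))
  have hint : ∀ G : E × E → ℝ, Continuous G →
      Integrable (fun q => f t q.1 q.2 * G q) (phaseMeasure d) := fun G hG =>
    integrable_phaseMeasure (hft.continuous.mul hG) (K := K) fun q hq => by simp [hK t _ _ hq]
  have hT1 := hint (fun q => ⟪q.2 - v t q.1, fderiv ℝ (fun y => v t y) q.1 (q.2 - v t q.1)⟫)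
    (by fun_prop)
  have hT2 := hint (fun q => ⟪v t q.1, gradient (fun y => φt t y) q.1⟫) (by fun_prop)
  have hT3 := hint (fun q => ⟪v t q.1 - q.2, gradient (fun y => p t y) q.1⟫) (by fun_prop)
  have hT12 := hT1.fun_neg.fun_add (hT2.const_mul (1/ε))
  have hfd := hf.differentiable one_ne_zero
  have hvd := hv.differentiable one_ne_zero
  have hpointwise : ∀ q : E × E,
      deriv (fun s => f s q.1 q.2 * modulationWeight (v s q.1) q.2) t
        = -fderiv ℝ (W · q.2) q.1 q.2
          + (1/ε) * fderiv ℝ (W q.1) q.2 (gradient (fun y => φt t y) q.1)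
          + (-(f t q.1 q.2 * ⟪q.2 - v t q.1, fderiv ℝ (fun y => v t y) q.1 (q.2 - v t q.1)⟫)
            + (1/ε) * (f t q.1 q.2 * ⟪v t q.1, gradient (fun y => φt t y) q.1⟫)
            - f t q.1 q.2 * ⟪v t q.1 - q.2, gradient (fun y => p t y) q.1⟫) := fun ⟨x, ξ⟩ =>
    deriv_mul_modulationWeight ((hfd (t, x, ξ)).comp t (f := fun s => (s, x, ξ)) (by fun_prop))
      ((hfd (t, x, ξ)).comp x (f := fun y => (t, y, ξ)) (by fun_prop))
      ((hfd (t, x, ξ)).comp ξ (f := fun η => (t, x, η)) (by fun_prop))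
      ((hvd (t, x)).comp t (f := fun s => (s, x)) (by fun_prop))
      ((hvd (t, x)).comp x (f := fun y => (t, y)) (by fun_prop))
      (hEuler t x) (hPDE t x ξ)
  rw [integral_congr_ae (.of_forall hpointwise),
    integral_phaseMeasure_neg_fderiv_fst_add_fderiv_snd_add (K := K) (hft.mul (by fun_prop))
      (fun ξ x k => by simp only [W, hfper t ξ x k, hvper t x k])
      (fun x ξ hξ => by simp [W, hK t x ξ hξ]) hgradφ (1/ε)
      (hT12.sub' hT3),
    integral_sub hT12 hT3, integral_add hT1.fun_neg (hT2.const_mul _), integral_neg,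
    integral_const_mul,
    integral_phaseMeasure hT1, integral_phaseMeasure hT2, integral_phaseMeasure hT3]

end ModulatedEnergy

theorem modulated_energy_derivative_identity_general (d : ℕ) (ε : ℝ)
    (v : ℝ → EuclideanSpace ℝ (Fin d) → EuclideanSpace ℝ (Fin d))
    (p : ℝ → EuclideanSpace ℝ (Fin d) → ℝ)
    (hv : ContDiff ℝ 1 (fun q : ℝ × EuclideanSpace ℝ (Fin d) => v q.1 q.2))
    (hp : ContDiff ℝ 1 (fun q : ℝ × EuclideanSpace ℝ (Fin d) => p q.1 q.2))
    (hvper : ∀ t, ZPeriodic (v t))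
    (hEuler : ∀ t x,
      deriv (fun s => v s x) t + fderiv ℝ (fun y => v t y) x (v t x)
        = -gradient (fun y => p t y) x)
    (f : ℝ → EuclideanSpace ℝ (Fin d) → EuclideanSpace ℝ (Fin d) → ℝ)
    (φt : ℝ → EuclideanSpace ℝ (Fin d) → ℝ)
    (hf : ContDiff ℝ 1 (fun q : ℝ × EuclideanSpace ℝ (Fin d) × EuclideanSpace ℝ (Fin d) =>
      f q.1 q.2.1 q.2.2))
    (hφ : ContDiff ℝ 1 (fun q : ℝ × EuclideanSpace ℝ (Fin d) => φt q.1 q.2))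
    (hfper : ∀ t ξ, ZPeriodic (fun x => f t x ξ))
    (hsupp : ∃ K : ℝ, ∀ t x ξ, K ≤ ‖ξ‖ → f t x ξ = 0)
    (hPDE : ∀ t x ξ,
      deriv (fun s => f s x ξ) t + ⟪ξ, gradient (fun y => f t y ξ) x⟫
        - (1/ε) * ⟪gradient (fun y => φt t y) x, gradient (fun η => f t x η) ξ⟫ = 0)
    (hEnergy : ∀ t : ℝ,
      (1/2) * (∫ x in fundDom d, ∫ ξ, f t x ξ * ‖ξ‖ ^ 2)
          + (1/2) * (∫ x in fundDom d, (∫ ξ, f t x ξ) * ‖gradient (fun y => φt t y) x‖ ^ 2)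
        = (1/2) * (∫ x in fundDom d, ∫ ξ, f 0 x ξ * ‖ξ‖ ^ 2)
          + (1/2) * (∫ x in fundDom d, (∫ ξ, f 0 x ξ) * ‖gradient (fun y => φt 0 y) x‖ ^ 2)) :
    ∀ t : ℝ,
      HasDerivAt (fun s =>
          (1/2) * (∫ x in fundDom d, ∫ ξ, f s x ξ * ‖ξ - v s x‖ ^ 2)
            + (1/2) * (∫ x in fundDom d, (∫ ξ, f s x ξ) * ‖gradient (fun y => φt s y) x‖ ^ 2))
        (-(∫ x in fundDom d, ∫ ξ, f t x ξ *
              ⟪ξ - v t x, fderiv ℝ (fun y => v t y) x (ξ - v t x)⟫)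
          + (1/ε) * (∫ x in fundDom d, ∫ ξ, f t x ξ *
              ⟪v t x, gradient (fun y => φt t y) x⟫)
          - ∫ x in fundDom d, ∫ ξ, f t x ξ *
              ⟪v t x - ξ, gradient (fun y => p t y) x⟫) t := by
  intro t
  obtain ⟨K, hK⟩ := hsupp
  have hK' : ∀ s x ξ, K < ‖ξ‖ → f s x ξ = 0 := fun s x ξ hξ => hK s x ξ hξ.le
  obtain ⟨C, hC⟩ : ∃ C, ∀ s : ℝ, (1/2) * (∫ x in fundDom d, ∫ ξ, f s x ξ * ‖ξ‖ ^ 2)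
      + (1/2) * (∫ x in fundDom d, (∫ ξ, f s x ξ) * ‖gradient (fun y => φt s y) x‖ ^ 2) = C :=
    ⟨_, hEnergy⟩
  have hF : ContDiff ℝ 1 fun z : ℝ × (EuclideanSpace ℝ (Fin d) × EuclideanSpace ℝ (Fin d)) =>
      f z.1 z.2.1 z.2.2 * modulationWeight (v z.1 z.2.1) z.2.2 :=
    (hf.comp (by fun_prop)).mul <| ContDiff.modulationWeight
      (hv.comp (f := fun z : ℝ × _ × _ => (z.1, z.2.1)) (by fun_prop)) (by fun_prop)
  have hderiv := (hasDerivAt_integral_phaseMeasure (K := K)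
    (F := fun s q => f s q.1 q.2 * modulationWeight (v s q.1) q.2) hF
    (fun s q hq => by simp [hK' s _ _ hq]) t).const_add C
  rw [integral_deriv_mul_modulationWeight hv hp hf hφ hvper hfper hK' hEuler hPDE t] at hderiv
  refine hderiv.congr_of_eventuallyEq (.of_forall fun s => ?_)
  have hfs : Continuous fun q : EuclideanSpace ℝ (Fin d) × EuclideanSpace ℝ (Fin d) =>
      f s q.1 q.2 := hf.continuous.comp (f := fun q => (s, q)) (by fun_prop)
  have hvs : Continuous (v s) := hv.continuous.comp (f := fun x => (s, x)) (by fun_prop)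
  dsimp only
  rw [integral_mul_norm_sub_sq_eq hfs hvs (hK' s), ← hC s]
  ring

/-- derivative identity for the modulated kinetic energy: if `v` solves the
incompressible Euler equations with pressure `p`, and `f` solves
`∂_t f + ξ·∇_x f − (1/ε)∇φ̃·∇_ξ f = 0` with conserved total energy, then
`d/dt [½∫∫f|ξ−v|² + ½∫ρ|∇φ̃|²] = −∫∫f(ξ−v)·∇v(ξ−v) + (1/ε)∫∫f v·∇φ̃ − ∫∫f(v−ξ)·∇p`. -/
theorem modulated_energy_derivative_identity (d : ℕ) (ε : ℝ) (hε : 0 < ε)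
    (v : ℝ → EuclideanSpace ℝ (Fin d) → EuclideanSpace ℝ (Fin d))
    (p : ℝ → EuclideanSpace ℝ (Fin d) → ℝ)
    (hv : ContDiff ℝ 1 (fun q : ℝ × EuclideanSpace ℝ (Fin d) => v q.1 q.2))
    (hp : ContDiff ℝ 1 (fun q : ℝ × EuclideanSpace ℝ (Fin d) => p q.1 q.2))
    (hvper : ∀ t, ZPeriodic (v t)) (hpper : ∀ t, ZPeriodic (p t))
    (hEuler : ∀ t x,
      deriv (fun s => v s x) t + fderiv ℝ (fun y => v t y) x (v t x)
        = -gradient (fun y => p t y) x)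
    (hdiv : ∀ t x, (∑ i, fderiv ℝ (fun y => v t y) x (EuclideanSpace.single i 1) i) = 0)
    (f : ℝ → EuclideanSpace ℝ (Fin d) → EuclideanSpace ℝ (Fin d) → ℝ)
    (φt : ℝ → EuclideanSpace ℝ (Fin d) → ℝ)
    (hf : ContDiff ℝ 1 (fun q : ℝ × EuclideanSpace ℝ (Fin d) × EuclideanSpace ℝ (Fin d) =>
      f q.1 q.2.1 q.2.2))
    (hφ : ContDiff ℝ 1 (fun q : ℝ × EuclideanSpace ℝ (Fin d) => φt q.1 q.2))
    (hfpos : ∀ t x ξ, 0 ≤ f t x ξ)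
    (hfper : ∀ t ξ, ZPeriodic (fun x => f t x ξ)) (hφper : ∀ t, ZPeriodic (φt t))
    (hsupp : ∃ K : ℝ, ∀ t x ξ, K ≤ ‖ξ‖ → f t x ξ = 0)
    (hPDE : ∀ t x ξ,
      deriv (fun s => f s x ξ) t + ⟪ξ, gradient (fun y => f t y ξ) x⟫
        - (1/ε) * ⟪gradient (fun y => φt t y) x, gradient (fun η => f t x η) ξ⟫ = 0)
    (hEnergy : ∀ t : ℝ,
      (1/2) * (∫ x in fundDom d, ∫ ξ, f t x ξ * ‖ξ‖ ^ 2)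
          + (1/2) * (∫ x in fundDom d, (∫ ξ, f t x ξ) * ‖gradient (fun y => φt t y) x‖ ^ 2)
        = (1/2) * (∫ x in fundDom d, ∫ ξ, f 0 x ξ * ‖ξ‖ ^ 2)
          + (1/2) * (∫ x in fundDom d, (∫ ξ, f 0 x ξ) * ‖gradient (fun y => φt 0 y) x‖ ^ 2)) :
    ∀ t : ℝ,
      HasDerivAt (fun s =>
          (1/2) * (∫ x in fundDom d, ∫ ξ, f s x ξ * ‖ξ - v s x‖ ^ 2)
            + (1/2) * (∫ x in fundDom d, (∫ ξ, f s x ξ) * ‖gradient (fun y => φt s y) x‖ ^ 2))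
        (-(∫ x in fundDom d, ∫ ξ, f t x ξ *
              ⟪ξ - v t x, fderiv ℝ (fun y => v t y) x (ξ - v t x)⟫)
          + (1/ε) * (∫ x in fundDom d, ∫ ξ, f t x ξ *
              ⟪v t x, gradient (fun y => φt t y) x⟫)
          - ∫ x in fundDom d, ∫ ξ, f t x ξ *
              ⟪v t x - ξ, gradient (fun y => p t y) x⟫) t :=
  modulated_energy_derivative_identity_general d ε v p hv hp hvper hEuler f φt hf hφ hfper hsupp
    hPDE hEnergy
end
end
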